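/- arXiv:2403.17471 — 7 statements merged into one kernel-verified Lean document; each statement's English description precedes it below -/
import Mathlib

section
/- Let d ≥ 1 and let 𝒪 be a nonempty open connected subset of ℝ^d. Then for every T > 0, all points x₀, x_T ∈ 𝒪, and all vectors v₀, z₀, v_T, z_T ∈ ℝ^d, there exists a curve 𝔩 : [0,T] → ℝ^d of class C², which is C³ on each interval of some finite partition of [0,T], such that 𝔩(0) = x₀, 𝔩'(0) = v₀, 𝔩''(0) = z₀, 𝔩(T) = x_T, 𝔩'(T) = v_T, 𝔩''(T) = z_T, and the range of 𝔩 is contained in 𝒪. -/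
private lemma chain_append {E : Type*} [NormedAddCommGroup E] [NormedSpace ℝ E]
    {O : Set E} {x z y : E}
    (h : ∃ k, ∃ p : ℕ → E, p 0 = x ∧ p k = z ∧ ∀ i < k, segment ℝ (p i) (p (i+1)) ⊆ O)
    (hseg : segment ℝ z y ⊆ O) :
    ∃ k, ∃ p : ℕ → E, p 0 = x ∧ p k = y ∧ ∀ i < k, segment ℝ (p i) (p (i+1)) ⊆ O := by
  obtain ⟨k, p, h0, hk, hs⟩ := h
  refine ⟨k+1, fun i => if i ≤ k then p i else y, by simp [h0], by simp, ?_⟩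
  intro i hi
  rcases lt_or_eq_of_le (Nat.lt_succ_iff.1 hi) with h' | h'
  · have h1 : i ≤ k := h'.le
    have h2 : i + 1 ≤ k := h'
    simpa [h1, h2] using hs i h'
  · subst h'
    simpa [hk, Nat.not_succ_le_self] using hseg

private lemma poly_conn {E : Type*} [NormedAddCommGroup E] [NormedSpace ℝ E]
    {O : Set E} (hO : IsOpen O) (hc : IsPreconnected O) {x y : E} (hx : x ∈ O) (hy : y ∈ O) :
    ∃ k, 0 < k ∧ ∃ p : ℕ → E, p 0 = x ∧ p k = y ∧
      ∀ i < k, segment ℝ (p i) (p (i+1)) ⊆ O := by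
  set S : Set E := {z | z ∈ O ∧ ∃ k, ∃ p : ℕ → E, p 0 = x ∧ p k = z ∧
      ∀ i < k, segment ℝ (p i) (p (i+1)) ⊆ O} with hSdef
  have hxS : x ∈ S := ⟨hx, 0, fun _ => x, rfl, rfl, by omega⟩
  have key : ∀ z ∈ O, ∃ r > 0, Metric.ball z r ⊆ O := fun z hz => Metric.isOpen_iff.1 hO z hz
  have hSopen : IsOpen S := by
    rw [Metric.isOpen_iff]
    rintro z ⟨hzO, hchain⟩
    obtain ⟨r, hr, hball⟩ := key z hzO
    refine ⟨r, hr, fun w hw => ⟨hball hw, chain_append hchain ?_⟩⟩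
    exact subset_trans ((convex_ball z r).segment_subset (Metric.mem_ball_self hr) hw) hball
  have hCopen : IsOpen (O \ S) := by
    rw [Metric.isOpen_iff]
    rintro z ⟨hzO, hzS⟩
    obtain ⟨r, hr, hball⟩ := key z hzO
    refine ⟨r, hr, fun w hw => ⟨hball hw, fun hwS => hzS ⟨hzO, chain_append hwS.2 ?_⟩⟩⟩
    exact subset_trans ((convex_ball z r).segment_subset hw (Metric.mem_ball_self hr)) hball
  have hOS : O ⊆ S := by
    by_contra hns
    obtain ⟨z, hzO, hzS⟩ : ∃ z, z ∈ O ∧ z ∉ S := by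
      simpa [Set.subset_def] using hns
    obtain ⟨w, -, hw1, hw2⟩ := hc S (O \ S) hSopen hCopen
      (fun w hw => (em (w ∈ S)).imp id fun h => ⟨hw, h⟩) ⟨x, hx, hxS⟩ ⟨z, hzO, hzO, hzS⟩
    exact hw2.2 hw1
  obtain ⟨-, k, p, h0, hk, hs⟩ := hOS hy
  refine ⟨k + 1, Nat.succ_pos k, fun i => p (min i k), by simpa using h0, by simpa using hk, ?_⟩
  intro i hi
  rcases lt_or_eq_of_le (Nat.lt_succ_iff.1 hi) with h' | h'
  · have h1 : min i k = i := min_eq_left h'.le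
    have h2 : min (i+1) k = i + 1 := min_eq_left h'
    simpa only [h1, h2] using hs i h'
  · subst h'
    have h1 : min i i = i := min_self i
    have h2 : min (i+1) i = i := by omega
    simp only [h1, h2, segment_same]
    simpa [hk] using hy

private lemma exists_index (c : ℕ → ℝ) (s : ℝ) :
    ∀ k : ℕ, 0 < k → c 0 ≤ s → s ≤ c k → ∃ i, i < k ∧ c i ≤ s ∧ s ≤ c (i+1) := by
  intro k
  induction k with
  | zero => omega
  | succ k ih =>
    intro _ h0 hk
    rcases Nat.eq_zero_or_pos k with rfl | hk0
    · exact ⟨0, Nat.zero_lt_one, h0, hk⟩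
    rcases le_or_gt s (c k) with h | h
    · obtain ⟨i, hi, h1, h2⟩ := ih hk0 h0 h
      exact ⟨i, hi.trans (Nat.lt_succ_self k), h1, h2⟩
    · exact ⟨k, Nat.lt_succ_self k, h.le, hk⟩

set_option maxHeartbeats 2000000 in
/-- In a nonempty open connected set `𝒪 ⊆ ℝ^d` one can join any two
points `x₀, x_T ∈ 𝒪` in time `T > 0` by a curve of class `C²`, piecewise `C³` on a finite
partition of `[0, T]`, with prescribed first and second derivatives at the endpoints, and
whose range on `[0, T]` stays in `𝒪`. -/
theorem stmt_1 {d : ℕ} (hd : 1 ≤ d)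
    (O : Set (EuclideanSpace ℝ (Fin d))) (hO : IsOpen O) (hOconn : IsConnected O)
    (T : ℝ) (hT : 0 < T)
    (x₀ xT : EuclideanSpace ℝ (Fin d)) (hx₀ : x₀ ∈ O) (hxT : xT ∈ O)
    (v₀ z₀ vT zT : EuclideanSpace ℝ (Fin d)) :
    ∃ l : ℝ → EuclideanSpace ℝ (Fin d),
      ContDiff ℝ 2 l ∧
      (∃ (n : ℕ) (a : ℕ → ℝ), a 0 = 0 ∧ a n = T ∧ (∀ i < n, a i < a (i + 1)) ∧
        ∀ i < n, ContDiffOn ℝ 3 l (Set.Icc (a i) (a (i + 1)))) ∧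
      l 0 = x₀ ∧ deriv l 0 = v₀ ∧ deriv (deriv l) 0 = z₀ ∧
      l T = xT ∧ deriv l T = vT ∧ deriv (deriv l) T = zT ∧
      ∀ s ∈ Set.Icc (0 : ℝ) T, l s ∈ O := by
  obtain ⟨k, hk0, p, hp0, hpk, hseg⟩ := poly_conn hO hOconn.isPreconnected hx₀ hxT
  obtain ⟨r₀, hr₀, hball₀⟩ := Metric.isOpen_iff.1 hO x₀ hx₀
  obtain ⟨rT, hrT, hballT⟩ := Metric.isOpen_iff.1 hO xT hxT
  set M : ℝ := ‖v₀‖ + ‖z₀‖ + ‖vT‖ + ‖zT‖ + 1 with hM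
  have hMv₀ : ‖v₀‖ + ‖z₀‖ ≤ M := by
    have := norm_nonneg vT; have := norm_nonneg zT
    rw [hM]; linarith
  have hMvT : ‖vT‖ + ‖zT‖ ≤ M := by
    have := norm_nonneg v₀; have := norm_nonneg z₀
    rw [hM]; linarith
  have hMpos : 0 < M := by positivity
  clear_value M
  set δ : ℝ := min (min 1 (T/3)) (min r₀ rT / (2*M)) with hδdef
  have hδpos : 0 < δ := lt_min (lt_min one_pos (by linarith)) (by positivity)
  have hδ1 : δ ≤ 1 := le_trans (min_le_left _ _) (min_le_left _ _)
  have hδT3 : δ ≤ T/3 := le_trans (min_le_left _ _) (min_le_right _ _)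
  have hδr : δ * M ≤ min r₀ rT / 2 := by
    have h1 : δ ≤ min r₀ rT / (2*M) := min_le_right _ _
    have h2 : δ * M ≤ (min r₀ rT / (2*M)) * M := by nlinarith
    calc δ * M ≤ (min r₀ rT / (2*M)) * M := h2
      _ = min r₀ rT / 2 := by field_simp
  clear_value δ
  have hδr₀ : δ * M < r₀ := by
    have := min_le_left r₀ rT
    linarith
  have hδrT : δ * M < rT := by
    have := min_le_right r₀ rT
    linarith
  have hkR : (k:ℝ) ≠ 0 := Nat.cast_ne_zero.2 hk0.ne'
  have hkRpos : (0:ℝ) < k := Nat.cast_pos.2 hk0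
  set w : ℝ := (T - 2*δ) / k with hwdef
  have hw : 0 < w := div_pos (by linarith) hkRpos
  set c : ℕ → ℝ := fun i => δ + (i:ℝ) * w with hcdef
  have hc0 : c 0 = δ := by simp [hcdef]
  have hck : c k = T - δ := by
    show δ + (k:ℝ) * ((T - 2*δ)/k) = T - δ
    field_simp
    ring
  have hcs : ∀ i, c (i+1) = c i + w := by
    intro i
    show δ + ((i:ℕ)+1 : ℕ) * w = (δ + i*w) + w
    push_cast
    ring
  have hcmono : ∀ i j : ℕ, i ≤ j → c i ≤ c j := by
    intro i j h
    have h1 : (i:ℝ) ≤ j := Nat.cast_le.2 h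
    show δ + (i:ℝ)*w ≤ δ + (j:ℝ)*w
    nlinarith
  clear_value w
  clear_value c
  -- the building blocks
  set σ : ℕ → ℝ → ℝ := fun j t => Real.smoothTransition ((t - c j)/w) with hσdef
  set χ₀ : ℝ → ℝ := fun t => 1 - Real.smoothTransition ((t - δ/2)/(δ/2)) with hχ₀def
  set χT : ℝ → ℝ := fun t => Real.smoothTransition ((t - (T - δ))/(δ/2)) with hχTdef
  set q₀ : ℝ → EuclideanSpace ℝ (Fin d) := fun t => t • v₀ + (t^2/2) • z₀ with hq₀def
  set qT : ℝ → EuclideanSpace ℝ (Fin d) :=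
    fun t => (t - T) • vT + ((t - T)^2/2) • zT with hqTdef
  set l : ℝ → EuclideanSpace ℝ (Fin d) := fun t =>
    x₀ + (∑ j ∈ Finset.range k, σ j t • (p (j+1) - p j)) + χ₀ t • q₀ t + χT t • qT t
    with hldef
  clear_value σ χ₀ χT q₀ qT l
  -- smoothness
  have hst : ∀ a b : ℝ, ContDiff ℝ 3 (fun t : ℝ => Real.smoothTransition ((t - a)/b)) := by
    intro a b
    exact Real.smoothTransition.contDiff.comp ((contDiff_id.sub contDiff_const).div_const b)
  have hq₀sm : ContDiff ℝ 3 q₀ := by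
    rw [hq₀def]
    exact (contDiff_id.smul contDiff_const).add
      (((contDiff_id.pow 2).div_const 2).smul contDiff_const)
  have hqTsm : ContDiff ℝ 3 qT := by
    rw [hqTdef]
    exact ((contDiff_id.sub contDiff_const).smul contDiff_const).add
      ((((contDiff_id.sub contDiff_const).pow 2).div_const 2).smul contDiff_const)
  have hχ₀sm : ContDiff ℝ 3 χ₀ := by
    rw [hχ₀def]; exact contDiff_const.sub (hst (δ/2) (δ/2))
  have hχTsm : ContDiff ℝ 3 χT := by
    rw [hχTdef]; exact hst (T - δ) (δ/2)
  have hlsm : ContDiff ℝ 3 l := by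
    rw [hldef]
    refine ((contDiff_const.add ?_).add (hχ₀sm.smul hq₀sm)).add (hχTsm.smul hqTsm)
    refine ContDiff.sum fun j _ => ?_
    rw [hσdef]
    exact (hst (c j) w).smul contDiff_const
  -- evaluation of the cut-offs
  have hσ0 : ∀ j t, t ≤ c j → σ j t = 0 := by
    intro j t h
    simp only [hσdef]
    exact Real.smoothTransition.zero_of_nonpos
      (div_nonpos_of_nonpos_of_nonneg (by linarith) hw.le)
  have hσ1 : ∀ j t, c (j+1) ≤ t → σ j t = 1 := by
    intro j t h
    simp only [hσdef]
    refine Real.smoothTransition.one_of_one_le ((le_div_iff₀ hw).2 ?_)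
    have := hcs j
    linarith
  have hχ₀1 : ∀ t, t ≤ δ/2 → χ₀ t = 1 := by
    intro t h
    have h2 : Real.smoothTransition ((t - δ/2)/(δ/2)) = 0 :=
      Real.smoothTransition.zero_of_nonpos
        (div_nonpos_of_nonpos_of_nonneg (by linarith) (by linarith))
    simp [hχ₀def, h2]
  have hχ₀0 : ∀ t, δ ≤ t → χ₀ t = 0 := by
    intro t h
    have h2 : Real.smoothTransition ((t - δ/2)/(δ/2)) = 1 :=
      Real.smoothTransition.one_of_one_le ((le_div_iff₀ (by linarith)).2 (by linarith))
    simp [hχ₀def, h2]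
  have hχT0 : ∀ t, t ≤ T - δ → χT t = 0 := by
    intro t h
    simp only [hχTdef]
    exact Real.smoothTransition.zero_of_nonpos
      (div_nonpos_of_nonpos_of_nonneg (by linarith) (by linarith))
  have hχT1 : ∀ t, T - δ/2 ≤ t → χT t = 1 := by
    intro t h
    simp only [hχTdef]
    exact Real.smoothTransition.one_of_one_le
      ((le_div_iff₀ (by linarith)).2 (by linarith))
  have hχ₀mem : ∀ t, 0 ≤ χ₀ t ∧ χ₀ t ≤ 1 := by
    intro t
    have h1 := Real.smoothTransition.nonneg ((t - δ/2)/(δ/2))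
    have h2 := Real.smoothTransition.le_one ((t - δ/2)/(δ/2))
    constructor
    · simp only [hχ₀def]; linarith
    · simp only [hχ₀def]; linarith
  have hχTmem : ∀ t, 0 ≤ χT t ∧ χT t ≤ 1 := by
    intro t
    simp only [hχTdef]
    exact ⟨Real.smoothTransition.nonneg _, Real.smoothTransition.le_one _⟩
  -- behaviour near 0
  set g₀ : ℝ → EuclideanSpace ℝ (Fin d) := fun t => x₀ + q₀ t with hg₀def
  clear_value g₀
  have heq0 : Set.EqOn l g₀ (Set.Iio (δ/2)) := by
    intro t ht
    have ht' : t < δ/2 := ht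
    have hsum : ∑ j ∈ Finset.range k, σ j t • (p (j+1) - p j) = 0 := by
      refine Finset.sum_eq_zero fun j _ => ?_
      rw [hσ0 j t (by
        have := hcmono 0 j (Nat.zero_le j)
        rw [hc0] at this
        linarith), zero_smul]
    simp only [hldef, hg₀def, hsum, hχ₀1 t ht'.le, hχT0 t (by linarith), one_smul,
      zero_smul, add_zero, zero_add]
  have hmem0 : Set.Iio (δ/2) ∈ nhds (0:ℝ) := isOpen_Iio.mem_nhds (Set.mem_Iio.2 (by positivity))
  have hev0 : l =ᶠ[nhds (0:ℝ)] g₀ := Filter.eventuallyEq_of_mem hmem0 heq0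
  have hg₀d : ∀ t, HasDerivAt g₀ (v₀ + t • z₀) t := by
    intro t
    have h1 : HasDerivAt (fun s : ℝ => s • v₀) v₀ t := by
      simpa using (hasDerivAt_id t).smul_const v₀
    have h2 : HasDerivAt (fun s : ℝ => (s^2/2) • z₀) (t • z₀) t := by
      have h := ((hasDerivAt_pow 2 t).div_const 2).smul_const z₀
      have e : (((2:ℕ):ℝ) * t ^ (2-1))/2 = t := by norm_num
      rwa [e] at h
    simpa [hg₀def, hq₀def] using (h1.add h2).const_add x₀
  have hl0 : l 0 = x₀ := by
    have h := heq0 (Set.mem_Iio.2 (by positivity) : (0:ℝ) ∈ Set.Iio (δ/2))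
    simp [h, hg₀def, hq₀def]
  have hld0 : deriv l 0 = v₀ := by
    rw [hev0.deriv_eq, (hg₀d 0).deriv]
    simp
  have hldd0 : deriv (deriv l) 0 = z₀ := by
    have h : deriv l =ᶠ[nhds (0:ℝ)] deriv g₀ := hev0.deriv
    rw [h.deriv_eq]
    have hg : deriv g₀ = fun t => v₀ + t • z₀ := funext fun t => (hg₀d t).deriv
    rw [hg]
    have h2 : HasDerivAt (fun t : ℝ => v₀ + t • z₀) ((1:ℝ) • z₀) 0 :=
      ((hasDerivAt_id (0:ℝ)).smul_const z₀).const_add v₀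
    rw [h2.deriv, one_smul]
  -- behaviour near T
  set gT : ℝ → EuclideanSpace ℝ (Fin d) := fun t => xT + qT t with hgTdef
  clear_value gT
  have heqT : Set.EqOn l gT (Set.Ioi (T - δ/2)) := by
    intro t ht
    have ht' : T - δ/2 < t := ht
    have hsum : ∑ j ∈ Finset.range k, σ j t • (p (j+1) - p j)
        = ∑ j ∈ Finset.range k, (p (j+1) - p j) := by
      refine Finset.sum_congr rfl fun j hj => ?_
      rw [hσ1 j t (by
        have h1 : c (j+1) ≤ c k := hcmono (j+1) k (Finset.mem_range.1 hj)
        rw [hck] at h1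
        linarith), one_smul]
    simp only [hldef, hgTdef, hsum, Finset.sum_range_sub, hpk, hp0,
      hχ₀0 t (by linarith), hχT1 t ht'.le, one_smul, zero_smul, add_zero]
    abel
  have hmemT : Set.Ioi (T - δ/2) ∈ nhds T :=
    isOpen_Ioi.mem_nhds (Set.mem_Ioi.2 (by linarith))
  have hevT : l =ᶠ[nhds T] gT := Filter.eventuallyEq_of_mem hmemT heqT
  have hgTd : ∀ t, HasDerivAt gT (vT + (t - T) • zT) t := by
    intro t
    have h1 : HasDerivAt (fun s : ℝ => (s - T) • vT) vT t := by
      simpa using ((hasDerivAt_id t).sub_const T).smul_const vT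
    have h2 : HasDerivAt (fun s : ℝ => ((s - T)^2/2) • zT) ((t - T) • zT) t := by
      have h := ((((hasDerivAt_id t).sub_const T).pow 2).div_const 2).smul_const zT
      have e : ((((2:ℕ):ℝ) * (id t - T) ^ (2-1) * 1))/2 = t - T := by norm_num
      rwa [e] at h
    simpa [hgTdef, hqTdef] using (h1.add h2).const_add xT
  have hlT : l T = xT := by
    have h := heqT (Set.mem_Ioi.2 (by linarith) : T ∈ Set.Ioi (T - δ/2))
    simp [h, hgTdef, hqTdef]
  have hldT : deriv l T = vT := by
    rw [hevT.deriv_eq, (hgTd T).deriv]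
    simp
  have hlddT : deriv (deriv l) T = zT := by
    have h : deriv l =ᶠ[nhds T] deriv gT := hevT.deriv
    rw [h.deriv_eq]
    have hg : deriv gT = fun t => vT + (t - T) • zT := funext fun t => (hgTd t).deriv
    rw [hg]
    have h2 : HasDerivAt (fun t : ℝ => vT + (t - T) • zT) ((1:ℝ) • zT) T :=
      (((hasDerivAt_id T).sub_const T).smul_const zT).const_add vT
    rw [h2.deriv, one_smul]
  -- membership
  have hmem : ∀ s ∈ Set.Icc (0:ℝ) T, l s ∈ O := by
    rintro s ⟨hs0, hsT⟩
    rcases le_or_gt s δ with h1 | h1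
    · -- near 0
      have hsum : ∑ j ∈ Finset.range k, σ j s • (p (j+1) - p j) = 0 := by
        refine Finset.sum_eq_zero fun j _ => ?_
        rw [hσ0 j s (by
          have := hcmono 0 j (Nat.zero_le j)
          rw [hc0] at this
          linarith), zero_smul]
      have hls : l s = x₀ + χ₀ s • q₀ s := by
        simp only [hldef, hsum, hχT0 s (by linarith), zero_smul, add_zero, zero_add]
      apply hball₀
      rw [Metric.mem_ball, dist_eq_norm, hls]
      have hnorm : ‖χ₀ s • q₀ s‖ ≤ ‖q₀ s‖ := by
        rw [norm_smul, Real.norm_eq_abs, abs_of_nonneg (hχ₀mem s).1]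
        nlinarith [(hχ₀mem s).2, norm_nonneg (q₀ s)]
      have hq : ‖q₀ s‖ ≤ δ * ‖v₀‖ + δ * ‖z₀‖ := by
        rw [hq₀def]
        refine le_trans (norm_add_le _ _) ?_
        rw [norm_smul, norm_smul, Real.norm_eq_abs, Real.norm_eq_abs,
          abs_of_nonneg hs0, abs_of_nonneg (by positivity : (0:ℝ) ≤ s^2/2)]
        have h2 : s^2/2 ≤ δ := by nlinarith
        have := norm_nonneg v₀
        have := norm_nonneg z₀
        nlinarith
      have hMle : δ * ‖v₀‖ + δ * ‖z₀‖ ≤ δ * M := by nlinarith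
      have he : ‖x₀ + χ₀ s • q₀ s - x₀‖ = ‖χ₀ s • q₀ s‖ := by
        congr 1
        abel
      rw [he]
      linarith
    rcases le_or_gt (T - δ) s with h2 | h2
    · -- near T
      have hsum : ∑ j ∈ Finset.range k, σ j s • (p (j+1) - p j)
          = ∑ j ∈ Finset.range k, (p (j+1) - p j) := by
        refine Finset.sum_congr rfl fun j hj => ?_
        rw [hσ1 j s (by
          have hc1 : c (j+1) ≤ c k := hcmono (j+1) k (Finset.mem_range.1 hj)
          rw [hck] at hc1
          linarith), one_smul]
      have hls : l s = xT + χT s • qT s := by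
        simp only [hldef, hsum, Finset.sum_range_sub, hp0, hpk,
          hχ₀0 s (by linarith), zero_smul, add_zero]
        abel
      apply hballT
      rw [Metric.mem_ball, dist_eq_norm, hls]
      have hnorm : ‖χT s • qT s‖ ≤ ‖qT s‖ := by
        rw [norm_smul, Real.norm_eq_abs, abs_of_nonneg (hχTmem s).1]
        nlinarith [(hχTmem s).2, norm_nonneg (qT s)]
      have hq : ‖qT s‖ ≤ δ * ‖vT‖ + δ * ‖zT‖ := by
        rw [hqTdef]
        refine le_trans (norm_add_le _ _) ?_
        rw [norm_smul, norm_smul, Real.norm_eq_abs, Real.norm_eq_abs,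
          abs_of_nonpos (by linarith : s - T ≤ 0),
          abs_of_nonneg (by positivity : (0:ℝ) ≤ (s - T)^2/2)]
        have h3 : (s - T)^2/2 ≤ δ := by nlinarith
        have := norm_nonneg vT
        have := norm_nonneg zT
        nlinarith
      have hMle : δ * ‖vT‖ + δ * ‖zT‖ ≤ δ * M := by nlinarith
      have he : ‖xT + χT s • qT s - xT‖ = ‖χT s • qT s‖ := by
        congr 1
        abel
      rw [he]
      linarith
    · -- middle
      obtain ⟨i, hik, hi1, hi2⟩ := exists_index c s k hk0 (by rw [hc0]; linarith)
        (by rw [hck]; linarith)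
      have hterm0 : ∀ j ∈ Finset.range k, j ∉ Finset.range (i+1) →
          σ j s • (p (j+1) - p j) = 0 := by
        intro j _ hj'
        have hij : i + 1 ≤ j := by
          simpa [Nat.lt_succ_iff, not_le] using hj'
        rw [hσ0 j s (le_trans hi2 (hcmono (i+1) j hij)), zero_smul]
      have hsum : ∑ j ∈ Finset.range k, σ j s • (p (j+1) - p j)
          = (p i - p 0) + σ i s • (p (i+1) - p i) := by
        rw [← Finset.sum_subset (Finset.range_subset_range.2 hik) hterm0,
          Finset.sum_range_succ]
        congr 1
        rw [← Finset.sum_range_sub p i]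
        refine Finset.sum_congr rfl fun j hj => ?_
        rw [hσ1 j s (le_trans (hcmono (j+1) i (Finset.mem_range.1 hj)) hi1), one_smul]
      have hls : l s = p i + σ i s • (p (i+1) - p i) := by
        simp only [hldef, hsum, hχ₀0 s h1.le, hχT0 s h2.le, zero_smul, add_zero, hp0]
        abel
      rw [hls]
      apply hseg i hik
      rw [segment_eq_image']
      refine ⟨σ i s, ⟨?_, ?_⟩, rfl⟩
      · simp only [hσdef]; exact Real.smoothTransition.nonneg _
      · simp only [hσdef]; exact Real.smoothTransition.le_one _
  refine ⟨l, hlsm.of_le (by norm_num),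
    ⟨1, fun i => if i = 0 then 0 else T, by simp, by simp, ?_, fun i _ => hlsm.contDiffOn⟩,
    hl0, hld0, hldd0, hlT, hldT, hlddT, hmem⟩
  intro i hi
  interval_cases i
  simpa using hT
end

section
/- Let S be a nonempty open subset of ℝ^d and let Q be a bounded positive kernel on S, i.e. Q(x,·) is a nonnegative Borel measure on S for each x, measurable in x, with sup_{x∈S} Q(x,S) < ∞. Assume: (1) there exists N₁ ≥ 1 such that for every k ≥ N₁ the iterate Q^k is strong Feller, i.e. for every bounded Borel function f on S the map x ↦ ∫_S f(y) Q^k(x,dy) is continuous on S; (2) for every x ∈ S and every nonempty open subset O of S there exists q(x,O) ∈ ℕ such that Q^k(x,O) > 0 for all k ≥ q(x,O). Let m ≥ 1 and let μ be a nonzero finite nonnegative Borel measure on S satisfying μQ^m = μ, i.e. μ(A) = ∫_S Q^m(x,A) μ(dx) for every Borel set A ⊆ S. Then μ(O) > 0 for every nonempty open subset O of S. -/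
/-!
If `μ` missed a nonempty open set `O`, invariance of `μ` under every `Q^{mj}` would make
`Q^{mj}(x, O)` vanish for `μ`-almost every `x` and all `j` simultaneously. Since `μ ≠ 0` some
such `x` exists, but irreducibility makes `Q^k(x, O)` positive for all large `k`, in particular
for some multiple of `m`.
-/

open MeasureTheory ProbabilityTheory

/-- Iterates of a kernel: `kernelIter Q k` is `Q^k`, with `Q^0` the identity
(deterministic) kernel and `Q^{k+1}(x, A) = ∫ Q^k(y, A) Q(x, dy)`. -/
noncomputable def kernelIter {α : Type*} [MeasurableSpace α] (Q : Kernel α α) : ℕ → Kernel α α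
  | 0 => Kernel.deterministic id measurable_id
  | n + 1 => (kernelIter Q n) ∘ₖ Q

section kernelIter

variable {α : Type*} [MeasurableSpace α]

lemma kernelIter_add (Q : Kernel α α) (a b : ℕ) :
    kernelIter Q (a + b) = kernelIter Q a ∘ₖ kernelIter Q b := by
  induction b with
  | zero => exact (Kernel.comp_id _).symm
  | succ n ih =>
    change kernelIter Q (a + n) ∘ₖ Q = _
    rw [ih, Kernel.comp_assoc]
    rfl

lemma kernelIter_mul (Q : Kernel α α) (m j : ℕ) :
    kernelIter Q (m * j) = kernelIter (kernelIter Q m) j := by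
  induction j with
  | zero => rfl
  | succ j ih =>
    rw [Nat.mul_succ, kernelIter_add, ih]
    rfl

lemma kernelIter_comp_eq_self {κ : Kernel α α} {μ : Measure α} (h : κ ∘ₘ μ = μ) (j : ℕ) :
    kernelIter κ j ∘ₘ μ = μ := by
  induction j with
  | zero => exact Measure.id_comp
  | succ j ih =>
    change (kernelIter κ j ∘ₖ κ) ∘ₘ μ = μ
    rw [← Measure.comp_assoc, h, ih]

end kernelIter

lemma ae_kernel_apply_eq_zero_of_comp_eq_self {α : Type*} [MeasurableSpace α]
    {κ : Kernel α α} {μ : Measure α} (h : κ ∘ₘ μ = μ) {s : Set α} (hs : MeasurableSet s)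
    (hμs : μ s = 0) : ∀ᵐ x ∂μ, κ x s = 0 := by
  have hint : ∫⁻ x, κ x s ∂μ = 0 := by
    rw [← Measure.bind_apply hs κ.aemeasurable, h, hμs]
  exact (lintegral_eq_zero_iff (κ.measurable_coe hs)).mp hint

theorem stmt_2_general {d : ℕ} (S : Set (EuclideanSpace ℝ (Fin d)))
    (Q : Kernel S S)
    (hirr : ∀ x : S, ∀ O : Set S, IsOpen O → O.Nonempty →
      ∃ q : ℕ, ∀ k, q ≤ k → 0 < kernelIter Q k x O)
    (m : ℕ) (hm : 1 ≤ m)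
    (μ : Measure S) (hμne : μ ≠ 0)
    (hinv : ∀ A : Set S, MeasurableSet A → μ A = ∫⁻ x, kernelIter Q m x A ∂μ) :
    ∀ O : Set S, IsOpen O → O.Nonempty → 0 < μ O := by
  intro O hO hOne
  have hQm : kernelIter Q m ∘ₘ μ = μ := Measure.ext fun A hA => by
    rw [Measure.bind_apply hA (Kernel.aemeasurable _), hinv A hA]
  by_contra hμO
  rw [not_lt, nonpos_iff_eq_zero] at hμO
  have hnull : ∀ᵐ x ∂μ, ∀ j, kernelIter Q (m * j) x O = 0 := ae_all_iff.2 fun j => by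
    rw [kernelIter_mul]
    exact ae_kernel_apply_eq_zero_of_comp_eq_self (kernelIter_comp_eq_self hQm j)
      hO.measurableSet hμO
  have := ae_neBot.2 hμne
  obtain ⟨x, hx⟩ := hnull.exists
  obtain ⟨q, hq⟩ := hirr x O hO hOne
  exact (hq (m * q) (Nat.le_mul_of_pos_left q hm)).ne' (hx q)

/-- Let `S` be a nonempty open subset of `ℝ^d` and `Q` a bounded positive
kernel on `S`. If some iterate threshold `N₁ ≥ 1` makes all `Q^k`, `k ≥ N₁`, strong Feller,
and if for every `x` and every nonempty open `O ⊆ S` the quantities `Q^k(x, O)` are positive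
for all large `k`, then any nonzero finite nonnegative measure `μ` with `μ Q^m = μ`
(`m ≥ 1`) charges every nonempty open subset of `S`. -/
theorem stmt_2 {d : ℕ} (S : Set (EuclideanSpace ℝ (Fin d)))
    (hSopen : IsOpen S) (hSne : S.Nonempty)
    (Q : Kernel S S) (hQbdd : IsFiniteKernel Q)
    (N₁ : ℕ) (hN₁ : 1 ≤ N₁)
    (hSF : ∀ k, N₁ ≤ k → ∀ f : S → ℝ, Measurable f → (∃ M : ℝ, ∀ y, |f y| ≤ M) →
      Continuous fun x : S => ∫ y, f y ∂(kernelIter Q k x))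
    (hirr : ∀ x : S, ∀ O : Set S, IsOpen O → O.Nonempty →
      ∃ q : ℕ, ∀ k, q ≤ k → 0 < kernelIter Q k x O)
    (m : ℕ) (hm : 1 ≤ m)
    (μ : Measure S) (hμfin : IsFiniteMeasure μ) (hμne : μ ≠ 0)
    (hinv : ∀ A : Set S, MeasurableSet A → μ A = ∫⁻ x, kernelIter Q m x A ∂μ) :
    ∀ O : Set S, IsOpen O → O.Nonempty → 0 < μ O :=
  stmt_2_general S Q hirr m hm μ hμne hinv
end

section
/- Let d ≥ 1, k > 1, and let V : ℝ^d → [1, ∞) be continuous with constants c_V, M_V, r_V > 0 such that c_V|x|^k ≤ V(x) ≤ M_V|x|^k whenever |x| ≥ r_V. Let 0 < β < min(1, k/2, k−1), κ > 0, and let L : ℝ^d → ℝ^d satisfy L(x) = 0 for |x| ≤ 1 and |L(x)| ≤ κ|x|^β for all x. Then for all ℏ, 𝔞 > 0 there exist c, c', C > 0 such that for all (x,v,z) ∈ ℝ^{3d}: c(|x|^k + |v|² + |z|²) − C ≤ ℏ(V(x) + |v|²/2 + |z|²/2) + 𝔞⟨L(x), v⟩ ≤ c'(1 + |x|^k + |v|²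 + |z|²). -/
/-!
Outside a ball, `V` is comparable to `|x|^k`, and inside it `V` is bounded by continuity. The
cross term is controlled by Cauchy–Schwarz and Young's inequality:
`𝔞|⟨L x, v⟩| ≤ (𝔞κ)²|x|^{2β}/ℏ + ℏ|v|²/4`. Since `2β < k`, the power `|x|^{2β}` is at most
`ε|x|^k + C_ε` for every `ε > 0`, so it can be absorbed into half of `ℏ c_V |x|^k`; for the
upper bound simply `|x|^{2β} ≤ 1 + |x|^k`.
-/

open scoped InnerProductSpace
open Filter

theorem Real.exists_rpow_le_mul_rpow_add {p q ε : ℝ} (hp : 0 ≤ p) (hpq : p < q) (hε : 0 < ε) :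
    ∃ C, ∀ t : ℝ, 0 ≤ t → t ^ p ≤ ε * t ^ q + C := by
  obtain ⟨T, hT⟩ := eventually_atTop.mp <|
    ((tendsto_rpow_neg_atTop (sub_pos.mpr hpq)).eventually (ge_mem_nhds hε)).and
      (eventually_gt_atTop 0)
  refine ⟨T ^ p, fun t ht => ?_⟩
  rcases le_total t T with htT | hTt
  · have := Real.rpow_le_rpow ht htT hp
    have : 0 ≤ ε * t ^ q := by positivity
    linarith
  · obtain ⟨hsmall, htpos⟩ := hT t hTt
    have hsplit : t ^ p = t ^ (-(q - p)) * t ^ q := by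
      rw [← Real.rpow_add htpos]; ring_nf
    have : 0 ≤ T ^ p := Real.rpow_nonneg (hT T le_rfl).2.le p
    rw [hsplit]
    nlinarith [Real.rpow_nonneg ht q]

theorem Real.rpow_le_one_add_rpow {s p q : ℝ} (hs : 0 ≤ s) (hp : 0 ≤ p) (hpq : p ≤ q) :
    s ^ p ≤ 1 + s ^ q := by
  rcases le_total s 1 with h | h
  · linarith [Real.rpow_le_one hs h hp, Real.rpow_nonneg hs q]
  · linarith [Real.rpow_le_rpow_of_exponent_le h hpq]

section GrowthBounds

variable {E : Type*} [NormedAddCommGroup E] [ProperSpace E]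

theorem exists_le_mul_one_add_rpow_of_le_outside_ball {V : E → ℝ} (hV : Continuous V)
    {M r k : ℝ} (hgrow : ∀ x, r ≤ ‖x‖ → V x ≤ M * ‖x‖ ^ k) :
    ∃ C, ∀ x, V x ≤ C * (1 + ‖x‖ ^ k) := by
  obtain ⟨B, hB⟩ := (isCompact_closedBall (0 : E) r).exists_bound_of_continuousOn hV.continuousOn
  refine ⟨max (max B M) 0, fun x => ?_⟩
  have hX : 0 ≤ ‖x‖ ^ k := Real.rpow_nonneg (norm_nonneg x) k
  have hC : 0 ≤ max (max B M) 0 := le_max_right _ _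
  rcases le_total ‖x‖ r with h | h
  · have := (le_abs_self _).trans (hB x (mem_closedBall_zero_iff.mpr h))
    have : B ≤ max (max B M) 0 := le_max_of_le_left (le_max_left _ _)
    nlinarith
  · have : M ≤ max (max B M) 0 := le_max_of_le_left (le_max_right _ _)
    nlinarith [hgrow x h]

theorem exists_mul_rpow_sub_le_of_le_outside_ball {V : E → ℝ} (hV : Continuous V)
    {c r k : ℝ} (hk : 0 ≤ k) (hgrow : ∀ x, r ≤ ‖x‖ → c * ‖x‖ ^ k ≤ V x) :
    ∃ D, ∀ x, c * ‖x‖ ^ k - D ≤ V x := by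
  obtain ⟨B, hB⟩ := (isCompact_closedBall (0 : E) r).exists_bound_of_continuousOn hV.continuousOn
  refine ⟨|B| + |c| * |r| ^ k, fun x => ?_⟩
  have hcr : 0 ≤ |c| * |r| ^ k := by positivity
  rcases le_total ‖x‖ r with h | h
  · have hVB := neg_abs_le (V x) |>.trans' (neg_le_neg (hB x (mem_closedBall_zero_iff.mpr h)))
    have hX : ‖x‖ ^ k ≤ |r| ^ k :=
      Real.rpow_le_rpow (norm_nonneg x) (h.trans (le_abs_self r)) hk
    have : c * ‖x‖ ^ k ≤ |c| * |r| ^ k :=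
      (mul_le_mul_of_nonneg_right (le_abs_self c) (Real.rpow_nonneg (norm_nonneg x) k)).trans
        (mul_le_mul_of_nonneg_left hX (abs_nonneg c))
    linarith [le_abs_self B]
  · linarith [hgrow x h, abs_nonneg B]

end GrowthBounds

section InnerBounds

variable {F : Type*} [NormedAddCommGroup F] [InnerProductSpace ℝ F]

theorem abs_mul_inner_le {h : ℝ} (hh : 0 < h) (a : ℝ) (u v : F) :
    |a * ⟪u, v⟫_ℝ| ≤ a ^ 2 * ‖u‖ ^ 2 / h + h * ‖v‖ ^ 2 / 4 := by
  have hcs : |a * ⟪u, v⟫_ℝ| ≤ |a| * (‖u‖ * ‖v‖) := by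
    rw [abs_mul]; exact mul_le_mul_of_nonneg_left (abs_real_inner_le_norm u v) (abs_nonneg a)
  rw [div_add_div _ _ hh.ne' four_ne_zero, le_div_iff₀ (by positivity)]
  nlinarith [sq_nonneg (2 * |a| * ‖u‖ - h * ‖v‖), sq_abs a]

theorem abs_mul_inner_le_of_norm_le_rpow {h κ β s : ℝ} (hh : 0 < h) (hs : 0 ≤ s) (a : ℝ)
    {u : F} (hu : ‖u‖ ≤ κ * s ^ β) (v : F) :
    |a * ⟪u, v⟫_ℝ| ≤ (a * κ) ^ 2 / h * s ^ (2 * β) + h * ‖v‖ ^ 2 / 4 := by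
  have hu2 : ‖u‖ ^ 2 ≤ κ ^ 2 * s ^ (2 * β) := by
    rw [mul_comm 2 β, Real.rpow_mul hs, Real.rpow_two, ← mul_pow]
    exact pow_le_pow_left₀ (norm_nonneg _) hu 2
  calc |a * ⟪u, v⟫_ℝ| ≤ a ^ 2 * ‖u‖ ^ 2 / h + h * ‖v‖ ^ 2 / 4 := abs_mul_inner_le hh a u v
    _ ≤ a ^ 2 * (κ ^ 2 * s ^ (2 * β)) / h + h * ‖v‖ ^ 2 / 4 := by gcongr
    _ = (a * κ) ^ 2 / h * s ^ (2 * β) + h * ‖v‖ ^ 2 / 4 := by ring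

end InnerBounds

theorem stmt_8_general {d : ℕ} (k : ℝ)
    (V : EuclideanSpace ℝ (Fin d) → ℝ) (hVc : Continuous V)
    (cV MV rV : ℝ) (hcV : 0 < cV)
    (hgrow : ∀ x : EuclideanSpace ℝ (Fin d), rV ≤ ‖x‖ →
      cV * ‖x‖ ^ k ≤ V x ∧ V x ≤ MV * ‖x‖ ^ k)
    (β κ : ℝ) (hβ0 : 0 < β) (hβ : β < min 1 (min (k / 2) (k - 1))) (hκ : 0 < κ)
    (L : EuclideanSpace ℝ (Fin d) → EuclideanSpace ℝ (Fin d))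
    (hLbound : ∀ x : EuclideanSpace ℝ (Fin d), ‖L x‖ ≤ κ * ‖x‖ ^ β) :
    ∀ hbar 𝔞 : ℝ, 0 < hbar → 0 < 𝔞 →
      ∃ c > 0, ∃ c' > 0, ∃ C > 0, ∀ x v z : EuclideanSpace ℝ (Fin d),
        c * (‖x‖ ^ k + ‖v‖ ^ 2 + ‖z‖ ^ 2) - C
            ≤ hbar * (V x + ‖v‖ ^ 2 / 2 + ‖z‖ ^ 2 / 2) + 𝔞 * ⟪L x, v⟫_ℝ ∧
          hbar * (V x + ‖v‖ ^ 2 / 2 + ‖z‖ ^ 2 / 2) + 𝔞 * ⟪L x, v⟫_ℝ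
            ≤ c' * (1 + ‖x‖ ^ k + ‖v‖ ^ 2 + ‖z‖ ^ 2) := by
  intro hbar a hh ha
  have h2βk : 2 * β < k := by linarith [(lt_min_iff.mp (lt_min_iff.mp hβ).2).1]
  obtain ⟨CV, hVup⟩ :=
    exists_le_mul_one_add_rpow_of_le_outside_ball hVc fun x hx => (hgrow x hx).2
  obtain ⟨DV, hVlow⟩ :=
    exists_mul_rpow_sub_le_of_le_outside_ball hVc (by linarith) fun x hx => (hgrow x hx).1
  set A := (a * κ) ^ 2 / hbar
  have hA : 0 < A := by positivity
  obtain ⟨Cx, hYoung⟩ := Real.exists_rpow_le_mul_rpow_add (by linarith) h2βk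
    (show 0 < hbar * cV / (2 * A) by positivity)
  refine ⟨min (hbar * cV / 2) (hbar / 4), by positivity, hbar * (|CV| + 1) + A, by positivity,
    hbar * |DV| + A * |Cx| + 1, by positivity, fun x v z => ?_⟩
  have hX : 0 ≤ ‖x‖ ^ k := Real.rpow_nonneg (norm_nonneg x) k
  have hv : 0 ≤ ‖v‖ ^ 2 := sq_nonneg _
  have hz : 0 ≤ ‖z‖ ^ 2 := sq_nonneg _
  obtain ⟨hIlow, hIup⟩ :=
    abs_le.mp (abs_mul_inner_le_of_norm_le_rpow hh (norm_nonneg x) a (hLbound x) v)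
  constructor
  · have hP : A * ‖x‖ ^ (2 * β) ≤ hbar * cV / 2 * ‖x‖ ^ k + A * |Cx| := by
      have := mul_le_mul_of_nonneg_left ((hYoung ‖x‖ (norm_nonneg x)).trans
        (add_le_add_right (le_abs_self Cx) _)) hA.le
      have hAε : A * (hbar * cV / (2 * A)) = hbar * cV / 2 := by field_simp
      rwa [mul_add, ← mul_assoc, hAε] at this
    have hc := min_le_left (hbar * cV / 2) (hbar / 4)
    have hc' := min_le_right (hbar * cV / 2) (hbar / 4)
    nlinarith [hVlow x, le_abs_self DV]
  · have hP := Real.rpow_le_one_add_rpow (norm_nonneg x) (by linarith) h2βk.le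
    have hV : hbar * V x ≤ hbar * |CV| * (1 + ‖x‖ ^ k) := by
      rw [mul_assoc]
      exact mul_le_mul_of_nonneg_left
        ((hVup x).trans (mul_le_mul_of_nonneg_right (le_abs_self CV) (by positivity))) hh.le
    have hCV : 0 ≤ hbar * |CV| := by positivity
    nlinarith [mul_le_mul_of_nonneg_left hP hA.le, mul_nonneg hCV (add_nonneg hv hz),
      mul_nonneg hh.le hX, mul_nonneg hh.le hv, mul_nonneg hh.le hz, mul_nonneg hA.le hv,
      mul_nonneg hA.le hz]

/-- If `V : ℝ^d → [1,∞)` is continuous with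
`c_V|x|^k ≤ V(x) ≤ M_V|x|^k` for `|x| ≥ r_V` (`k > 1`), `0 < β < min(1, k/2, k-1)`,
and `L` vanishes on the unit ball with `|L(x)| ≤ κ|x|^β`, then for all `ℏ, 𝔞 > 0` there
exist `c, c', C > 0` such that for all `(x,v,z)`:
`c(|x|^k + |v|² + |z|²) - C ≤ ℏ(V(x) + |v|²/2 + |z|²/2) + 𝔞⟨L(x), v⟩ ≤
c'(1 + |x|^k + |v|² + |z|²)`. -/
theorem stmt_8 {d : ℕ} (hd : 1 ≤ d) (k : ℝ) (hk : 1 < k)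
    (V : EuclideanSpace ℝ (Fin d) → ℝ) (hV1 : ∀ x, 1 ≤ V x) (hVc : Continuous V)
    (cV MV rV : ℝ) (hcV : 0 < cV) (hMV : 0 < MV) (hrV : 0 < rV)
    (hgrow : ∀ x : EuclideanSpace ℝ (Fin d), rV ≤ ‖x‖ →
      cV * ‖x‖ ^ k ≤ V x ∧ V x ≤ MV * ‖x‖ ^ k)
    (β κ : ℝ) (hβ0 : 0 < β) (hβ : β < min 1 (min (k / 2) (k - 1))) (hκ : 0 < κ)
    (L : EuclideanSpace ℝ (Fin d) → EuclideanSpace ℝ (Fin d))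
    (hL0 : ∀ x : EuclideanSpace ℝ (Fin d), ‖x‖ ≤ 1 → L x = 0)
    (hLbound : ∀ x : EuclideanSpace ℝ (Fin d), ‖L x‖ ≤ κ * ‖x‖ ^ β) :
    ∀ hbar 𝔞 : ℝ, 0 < hbar → 0 < 𝔞 →
      ∃ c > 0, ∃ c' > 0, ∃ C > 0, ∀ x v z : EuclideanSpace ℝ (Fin d),
        c * (‖x‖ ^ k + ‖v‖ ^ 2 + ‖z‖ ^ 2) - C
            ≤ hbar * (V x + ‖v‖ ^ 2 / 2 + ‖z‖ ^ 2 / 2) + 𝔞 * ⟪L x, v⟫_ℝ ∧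
          hbar * (V x + ‖v‖ ^ 2 / 2 + ‖z‖ ^ 2 / 2) + 𝔞 * ⟪L x, v⟫_ℝ
            ≤ c' * (1 + ‖x‖ ^ k + ‖v‖ ^ 2 + ‖z‖ ^ 2) :=
  stmt_8_general k V hVc cV MV rV hcV hgrow β κ hβ0 hβ hκ L hLbound
end

section
/- Let d ≥ 1, k ∈ (1,2], and let V : ℝ^d → [1, ∞) be continuous with constants c_V, r_V > 0 such that c_V|x|^k ≤ V(x) whenever |x| ≥ r_V. Let κ > 0 and let L : ℝ^d → ℝ^d satisfy L(x) = 0 for |x| ≤ 1 and |L(x)| ≤ κ|x|^{k−1} for all x. Set p₁ = k/(k−1). If ℏ, 𝔞 > 0 satisfy 𝔞κ/p₁ < c_V ℏ and 𝔞κ/k + 𝔞/2 < ℏ/2, then the function F₀(x,v,z) = ℏ(V(x) + |v|²/2 + |z|²/2) + 𝔞⟨L(x), v⟩ + 𝔞⟨v, z⟩ is bounded from below on ℝ^{3d}. -/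
open scoped InnerProductSpace

/-! Bound the two cross terms from below. By Cauchy–Schwarz and Young's inequality with exponents
`k` and `p₁ = k/(k-1)`, `𝔞⟨L(x), v⟩ ≥ -𝔞κ(|v|^k/k + |x|^k/p₁)`, and `|v|^k ≤ |v|² + 1` since
`k ≤ 2`; also `𝔞⟨v, z⟩ ≥ -𝔞(|v|² + |z|²)/2`. The second condition on `ℏ, 𝔞` leaves nonnegative
coefficients in front of `|v|²` and `|z|²`, and the first one makes `ℏ V(x) - 𝔞κ|x|^k/p₁`
nonnegative outside the ball of radius `r_V`; inside it this term is bounded since `V ≥ 0`. -/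

lemma rpow_le_sq_add_one {t k : ℝ} (ht : 0 ≤ t) (hk0 : 0 ≤ k) (hk2 : k ≤ 2) :
    t ^ k ≤ t ^ 2 + 1 := by
  rcases le_or_gt t 1 with ht1 | ht1
  · nlinarith [Real.rpow_le_one ht ht1 hk0]
  · have : t ^ k ≤ t ^ (2 : ℝ) := Real.rpow_le_rpow_of_exponent_le ht1.le hk2
    norm_cast at this
    linarith

lemma mul_rpow_sub_one_le {s t k : ℝ} (hs : 0 ≤ s) (ht : 0 ≤ t) (hk : 1 < k) :
    t * s ^ (k - 1) ≤ t ^ k / k + s ^ k / (k / (k - 1)) := by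
  have hconj : k.HolderConjugate (k / (k - 1)) := Real.HolderConjugate.conjExponent hk
  have hpow : (s ^ (k - 1)) ^ (k / (k - 1)) = s ^ k := by
    rw [← Real.rpow_mul hs, mul_div_cancel₀ _ (sub_pos.2 hk).ne']
  simpa only [hpow] using Real.young_inequality_of_nonneg ht (Real.rpow_nonneg hs (k - 1)) hconj

section InnerProductSpace

variable {E : Type*} [NormedAddCommGroup E] [InnerProductSpace ℝ E]

lemma neg_le_real_inner_of_norm_le_mul_rpow {a : E} (v : E) {κ s k : ℝ} (hκ : 0 ≤ κ)
    (hs : 0 ≤ s) (hk : 1 < k) (ha : ‖a‖ ≤ κ * s ^ (k - 1)) :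
    -(κ * (‖v‖ ^ k / k + s ^ k / (k / (k - 1)))) ≤ ⟪a, v⟫_ℝ := by
  have hyoung := mul_le_mul_of_nonneg_left (mul_rpow_sub_one_le hs (norm_nonneg v) hk) hκ
  have hcs : ‖a‖ * ‖v‖ ≤ κ * s ^ (k - 1) * ‖v‖ := mul_le_mul_of_nonneg_right ha (norm_nonneg v)
  nlinarith [neg_le_of_abs_le (abs_real_inner_le_norm a v)]

lemma neg_half_sq_add_le_real_inner (v z : E) : -(‖v‖ ^ 2 / 2 + ‖z‖ ^ 2 / 2) ≤ ⟪v, z⟫_ℝ := by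
  nlinarith [norm_add_sq_real v z, sq_nonneg ‖v + z‖]

end InnerProductSpace

lemma exists_le_mul_sub_mul_rpow {E : Type*} [SeminormedAddCommGroup E] {V : E → ℝ}
    {h c C r k : ℝ} (hh : 0 ≤ h) (hC : 0 ≤ C) (hk : 0 ≤ k) (hV : ∀ x, 0 ≤ V x)
    (hgrow : ∀ x, r ≤ ‖x‖ → c * ‖x‖ ^ k ≤ V x) (hCc : C ≤ c * h) :
    ∃ m, ∀ x, m ≤ h * V x - C * ‖x‖ ^ k := by
  refine ⟨min 0 (-(C * r ^ k)), fun x => ?_⟩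
  have hxk : 0 ≤ ‖x‖ ^ k := Real.rpow_nonneg (norm_nonneg x) k
  rcases le_or_gt r ‖x‖ with hr | hr
  · have hcV : h * (c * ‖x‖ ^ k) ≤ h * V x := mul_le_mul_of_nonneg_left (hgrow x hr) hh
    nlinarith [min_le_left 0 (-(C * r ^ k))]
  · have hxr : C * ‖x‖ ^ k ≤ C * r ^ k :=
      mul_le_mul_of_nonneg_left (Real.rpow_le_rpow (norm_nonneg x) hr.le hk) hC
    nlinarith [min_le_right 0 (-(C * r ^ k)), mul_nonneg hh (hV x)]

theorem stmt_9_general {d : ℕ} (k : ℝ) (hk1 : 1 < k) (hk2 : k ≤ 2)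
    (V : EuclideanSpace ℝ (Fin d) → ℝ) (hV1 : ∀ x, 1 ≤ V x)
    (cV rV : ℝ)
    (hgrow : ∀ x : EuclideanSpace ℝ (Fin d), rV ≤ ‖x‖ → cV * ‖x‖ ^ k ≤ V x)
    (κ : ℝ) (hκ : 0 < κ)
    (L : EuclideanSpace ℝ (Fin d) → EuclideanSpace ℝ (Fin d))
    (hLbound : ∀ x : EuclideanSpace ℝ (Fin d), ‖L x‖ ≤ κ * ‖x‖ ^ (k - 1))
    (hbar 𝔞 : ℝ) (hhbar : 0 < hbar) (h𝔞 : 0 < 𝔞)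
    (hcond1 : 𝔞 * κ / (k / (k - 1)) < cV * hbar)
    (hcond2 : 𝔞 * κ / k + 𝔞 / 2 < hbar / 2) :
    ∃ m : ℝ, ∀ x v z : EuclideanSpace ℝ (Fin d),
      m ≤ hbar * (V x + ‖v‖ ^ 2 / 2 + ‖z‖ ^ 2 / 2) + 𝔞 * ⟪L x, v⟫_ℝ + 𝔞 * ⟪v, z⟫_ℝ := by
  have hk0 : 0 < k := zero_lt_one.trans hk1
  obtain ⟨m, hm⟩ := exists_le_mul_sub_mul_rpow hhbar.le (by positivity) hk0.le
    (fun x => zero_le_one.trans (hV1 x)) hgrow hcond1.le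
  refine ⟨m - 𝔞 * κ / k, fun x v z => ?_⟩
  have hLv := mul_le_mul_of_nonneg_left
    (neg_le_real_inner_of_norm_le_mul_rpow v hκ.le (norm_nonneg x) hk1 (hLbound x)) h𝔞.le
  have hvz := mul_le_mul_of_nonneg_left (neg_half_sq_add_le_real_inner v z) h𝔞.le
  have haκ : 0 ≤ 𝔞 * κ / k := by positivity
  have hvk := mul_le_mul_of_nonneg_left (rpow_le_sq_add_one (norm_nonneg v) hk0.le hk2) haκ
  have hv2 := mul_nonneg (by linarith : 0 ≤ hbar / 2 - 𝔞 / 2 - 𝔞 * κ / k) (sq_nonneg ‖v‖)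
  have hz2 := mul_nonneg (by linarith : 0 ≤ hbar / 2 - 𝔞 / 2) (sq_nonneg ‖z‖)
  linear_combination hm x + hLv + hvz + hvk + hv2 + hz2

/-- If `V : ℝ^d → [1,∞)` is continuous with `c_V|x|^k ≤ V(x)` for
`|x| ≥ r_V` (`k ∈ (1,2]`), `L` vanishes on the unit ball with `|L(x)| ≤ κ|x|^{k-1}`, and
`ℏ, 𝔞 > 0` satisfy `𝔞κ/p₁ < c_V ℏ` (with `p₁ = k/(k-1)`) and `𝔞κ/k + 𝔞/2 < ℏ/2`, then
`F₀(x,v,z) = ℏ(V(x) + |v|²/2 + |z|²/2) + 𝔞⟨L(x), v⟩ + 𝔞⟨v, z⟩` is bounded from below on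
`ℝ^{3d}`. -/
theorem stmt_9 {d : ℕ} (hd : 1 ≤ d) (k : ℝ) (hk1 : 1 < k) (hk2 : k ≤ 2)
    (V : EuclideanSpace ℝ (Fin d) → ℝ) (hV1 : ∀ x, 1 ≤ V x) (hVc : Continuous V)
    (cV rV : ℝ) (hcV : 0 < cV) (hrV : 0 < rV)
    (hgrow : ∀ x : EuclideanSpace ℝ (Fin d), rV ≤ ‖x‖ → cV * ‖x‖ ^ k ≤ V x)
    (κ : ℝ) (hκ : 0 < κ)
    (L : EuclideanSpace ℝ (Fin d) → EuclideanSpace ℝ (Fin d))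
    (hL0 : ∀ x : EuclideanSpace ℝ (Fin d), ‖x‖ ≤ 1 → L x = 0)
    (hLbound : ∀ x : EuclideanSpace ℝ (Fin d), ‖L x‖ ≤ κ * ‖x‖ ^ (k - 1))
    (hbar 𝔞 : ℝ) (hhbar : 0 < hbar) (h𝔞 : 0 < 𝔞)
    (hcond1 : 𝔞 * κ / (k / (k - 1)) < cV * hbar)
    (hcond2 : 𝔞 * κ / k + 𝔞 / 2 < hbar / 2) :
    ∃ m : ℝ, ∀ x v z : EuclideanSpace ℝ (Fin d),
      m ≤ hbar * (V x + ‖v‖ ^ 2 / 2 + ‖z‖ ^ 2 / 2) + 𝔞 * ⟪L x, v⟫_ℝ + 𝔞 * ⟪v, z⟫_ℝ :=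
  stmt_9_general k hk1 hk2 V hV1 cV rV hgrow κ hκ L hLbound hbar 𝔞 hhbar h𝔞 hcond1 hcond2
end

section
/- Let d ≥ 2, N ≥ 2, a₀ > 0, B, β > 0, and let V_I : ℝ^d∖{0} → ℝ be continuous of the form V_I(y) = B|y|^{−β} + Φ(y), where Φ is continuous, Φ is bounded on {y : |y| > r_Φ} for some r_Φ > 0, and |y|^β Φ(y) → 0 as y → 0. Define V on O_V = {x = (x¹,…,x^N) ∈ (ℝ^d)^N : x^i ≠ x^j for i ≠ j} by V(x) = Σ_{i=1}^N a₀|x^i|²/2 + Σ_{1 ≤ i < j ≤ N} V_I(x^i − x^j). Then for every R > 0 there exist ρ > 0 and r > 0 such that every x ∈ O_V with V(x) ≤ R satisfies |x| ≤ ρ and |x^i − x^j| ≥ r for all i ≠ j; consequently, the closure of the sublevel set {x ∈ O_V : V(x) < R} is a compact subset of O_V. -/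
/-- The configuration space `(ℝ^d)^N`, with its Euclidean (`l²`) structure. -/
abbrev Conf (d N : ℕ) : Type := PiLp 2 (fun _ : Fin N => EuclideanSpace ℝ (Fin d))

set_option maxHeartbeats 1000000 in
/-- For `V(x) = Σ_i a₀|x^i|²/2 + Σ_{i<j} V_I(x^i - x^j)` with a
singular interaction `V_I(y) = B|y|^{-β} + Φ(y)` (`Φ` continuous away from `0`, bounded
outside a ball, `|y|^β Φ(y) → 0` at `0`), every sublevel set `{V ≤ R}` in the collision-free
configuration space is bounded and uniformly away from collisions; consequently the closure
of `{x ∈ O_V : V(x) < R}` is a compact subset of `O_V`. -/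
theorem stmt_14 {d N : ℕ} (hd : 2 ≤ d) (hN : 2 ≤ N) (a₀ B β : ℝ)
    (ha₀ : 0 < a₀) (hB : 0 < B) (hβ : 0 < β)
    (VI Φ : EuclideanSpace ℝ (Fin d) → ℝ)
    (hVIcont : ContinuousOn VI {y : EuclideanSpace ℝ (Fin d) | y ≠ 0})
    (hform : ∀ y : EuclideanSpace ℝ (Fin d), y ≠ 0 → VI y = B * ‖y‖ ^ (-β) + Φ y)
    (hΦcont : ContinuousOn Φ {y : EuclideanSpace ℝ (Fin d) | y ≠ 0})
    (rΦ : ℝ) (hrΦ : 0 < rΦ) (MΦ : ℝ)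
    (hΦbdd : ∀ y : EuclideanSpace ℝ (Fin d), rΦ < ‖y‖ → |Φ y| ≤ MΦ)
    (hΦ0 : Filter.Tendsto (fun y : EuclideanSpace ℝ (Fin d) => ‖y‖ ^ β * Φ y)
      (nhdsWithin 0 {y : EuclideanSpace ℝ (Fin d) | y ≠ 0}) (nhds 0))
    (V : Conf d N → ℝ)
    (hV : ∀ x : Conf d N,
      V x = (∑ i : Fin N, a₀ * ‖x i‖ ^ 2 / 2)
        + ∑ i : Fin N, ∑ j ∈ Finset.univ.filter (fun j => i < j), VI (x i - x j)) :
    ∀ R : ℝ, 0 < R →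
      (∃ ρ > 0, ∃ r > 0, ∀ x : Conf d N, (∀ i j : Fin N, i ≠ j → x i ≠ x j) → V x ≤ R →
        ‖x‖ ≤ ρ ∧ ∀ i j : Fin N, i ≠ j → r ≤ ‖x i - x j‖) ∧
      IsCompact
        (closure {x : Conf d N | (∀ i j : Fin N, i ≠ j → x i ≠ x j) ∧ V x < R}) ∧
      closure {x : Conf d N | (∀ i j : Fin N, i ≠ j → x i ≠ x j) ∧ V x < R}
        ⊆ {x : Conf d N | ∀ i j : Fin N, i ≠ j → x i ≠ x j} := by
  classical
  intro R hR

  -- Step A: near 0, VI y ≥ (B/2)‖y‖^{-β}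
  obtain ⟨δ, hδpos, hδ⟩ := Metric.tendsto_nhdsWithin_nhds.mp hΦ0 (B / 2) (by positivity)
  have hnear : ∀ y : (EuclideanSpace ℝ (Fin d)), y ≠ 0 → ‖y‖ < δ → B / 2 * ‖y‖ ^ (-β) ≤ VI y := by
    intro y hy hyδ
    have hny : 0 < ‖y‖ := norm_pos_iff.mpr hy
    have h1 : |‖y‖ ^ β * Φ y| < B / 2 := by
      have := hδ hy (by simpa [dist_eq_norm] using hyδ)
      rwa [Real.dist_eq, sub_zero] at this
    have h2 : -(B / 2) ≤ ‖y‖ ^ β * Φ y := (abs_lt.mp h1).1.le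
    have hpow : (0 : ℝ) < ‖y‖ ^ (-β) := Real.rpow_pos_of_pos hny _
    have h3 : ‖y‖ ^ β * ‖y‖ ^ (-β) = 1 := by
      rw [← Real.rpow_add hny]; simp
    have h4 := mul_le_mul_of_nonneg_right h2 hpow.le
    have h5 : ‖y‖ ^ β * Φ y * ‖y‖ ^ (-β) = Φ y := by
      rw [mul_comm (‖y‖ ^ β) (Φ y), mul_assoc, h3, mul_one]
    rw [hform y hy]
    rw [h5] at h4
    nlinarith [hpow]
  -- Step B: uniform lower bound -m for VI on y ≠ 0
  set δ₀ : ℝ := min (δ / 2) rΦ with hδ₀def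
  have hδ₀pos : 0 < δ₀ := lt_min (by linarith) hrΦ
  have hδ₀δ : δ₀ < δ := lt_of_le_of_lt (min_le_left _ _) (by linarith)
  have hδ₀rΦ : δ₀ ≤ rΦ := min_le_right _ _
  set A : Set (EuclideanSpace ℝ (Fin d)) := Metric.closedBall 0 rΦ ∩ (Metric.ball 0 δ₀)ᶜ with hAdef
  have hAcomp : IsCompact A :=
    (isCompact_closedBall 0 rΦ).inter_right Metric.isOpen_ball.isClosed_compl
  have hAsub : A ⊆ {y : (EuclideanSpace ℝ (Fin d)) | y ≠ 0} := by
    rintro y ⟨-, hy2⟩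
    have : δ₀ ≤ dist y 0 := not_lt.mp (fun h => hy2 (Metric.mem_ball.mpr h))
    intro h0
    rw [h0] at this
    simp at this
    linarith
  obtain ⟨C, hC⟩ := (hAcomp.image_of_continuousOn (hVIcont.mono hAsub)).bddBelow
  set m : ℝ := max 0 (max (-C) MΦ) with hmdef
  have hm0 : 0 ≤ m := le_max_left _ _
  have hmC : -m ≤ C := by
    have : -C ≤ m := le_trans (le_max_left _ _) (le_max_right _ _)
    linarith
  have hmM : -m ≤ -MΦ := by
    have : MΦ ≤ m := le_trans (le_max_right _ _) (le_max_right _ _)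
    linarith
  have hmlow : ∀ y : (EuclideanSpace ℝ (Fin d)), y ≠ 0 → -m ≤ VI y := by
    intro y hy
    have hny : 0 < ‖y‖ := norm_pos_iff.mpr hy
    rcases le_or_gt ‖y‖ δ₀ with h1 | h1
    · have := hnear y hy (lt_of_le_of_lt h1 hδ₀δ)
      have hpow : (0 : ℝ) < ‖y‖ ^ (-β) := Real.rpow_pos_of_pos hny _
      nlinarith
    · rcases le_or_gt ‖y‖ rΦ with h2 | h2
      · have hyA : y ∈ A := by
          constructor
          · simpa [Metric.mem_closedBall, dist_eq_norm] using h2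
          · simp only [Set.mem_compl_iff, Metric.mem_ball, dist_eq_norm, sub_zero]
            push_neg
            exact h1.le
        exact le_trans hmC (hC ⟨y, hyA, rfl⟩)
      · rw [hform y hy]
        have hpow : (0 : ℝ) < ‖y‖ ^ (-β) := Real.rpow_pos_of_pos hny _
        have hb := hΦbdd y h2
        have : -MΦ ≤ Φ y := by
          have := (abs_le.mp hb).1
          linarith
        nlinarith
  -- Step C: bounds for sublevel points
  set Knum : ℝ := R + 2 * (N : ℝ) ^ 2 * m with hKdef
  have hNpos : (0 : ℝ) < (N : ℝ) := by positivity
  have hK : 0 < Knum := by positivity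
  have key : ∀ x : PiLp 2 (fun _ : Fin N => (EuclideanSpace ℝ (Fin d))), (∀ i j : Fin N, i ≠ j → x i ≠ x j) →
      V x ≤ R →
      (∑ i : Fin N, ‖x i‖ ^ 2 ≤ 2 * (R + (N : ℝ) ^ 2 * m) / a₀) ∧
      ∀ i j : Fin N, i < j → VI (x i - x j) ≤ Knum := by
    intro x hx hxR
    rw [hV x] at hxR
    set g : Fin N → ℝ := fun i => ∑ j ∈ Finset.univ.filter (fun j => i < j), VI (x i - x j)
      with hgdef
    have hNm : 0 ≤ (N : ℝ) * m := by positivity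
    have hterm : ∀ i j : Fin N, i ≠ j → -m ≤ VI (x i - x j) := fun i j h =>
      hmlow _ (sub_ne_zero.mpr (hx i j h))
    have hg : ∀ i, -((N : ℝ) * m) ≤ g i := by
      intro i
      have h1 : ∑ j ∈ Finset.univ.filter (fun j => i < j), (-m) ≤ g i :=
        Finset.sum_le_sum fun j hj => hterm i j (Finset.mem_filter.mp hj).2.ne
      have h2 : ((Finset.univ.filter (fun j => i < j)).card : ℝ) ≤ (N : ℝ) := by
        exact_mod_cast le_trans (Finset.card_filter_le _ _) (by simp)
      rw [Finset.sum_const, nsmul_eq_mul] at h1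
      nlinarith
    have hS1nn : 0 ≤ ∑ i : Fin N, a₀ * ‖x i‖ ^ 2 / 2 :=
      Finset.sum_nonneg fun i _ => by positivity
    have hS2 : -((N : ℝ) * ((N : ℝ) * m)) ≤ ∑ i, g i := by
      have h1 : ∑ i : Fin N, (-((N : ℝ) * m)) ≤ ∑ i, g i := Finset.sum_le_sum fun i _ => hg i
      rw [Finset.sum_const, nsmul_eq_mul] at h1
      simp only [Finset.card_univ, Fintype.card_fin] at h1
      nlinarith
    have hS1 : ∑ i : Fin N, a₀ * ‖x i‖ ^ 2 / 2 ≤ R + (N : ℝ) ^ 2 * m := by nlinarith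
    constructor
    · have heq : ∑ i : Fin N, a₀ * ‖x i‖ ^ 2 / 2 = a₀ / 2 * ∑ i, ‖x i‖ ^ 2 := by
        rw [Finset.mul_sum]; congr 1; ext i; ring
      rw [heq] at hS1
      rw [le_div_iff₀ ha₀]
      nlinarith
    · intro i j hij
      have hjmem : j ∈ Finset.univ.filter (fun j' => i < j') := by simp [hij]
      have h1 : VI (x i - x j) + m ≤ g i + (N : ℝ) * m := by
        have hs : ∑ j' ∈ Finset.univ.filter (fun j' => i < j'), (VI (x i - x j') + m)
            = g i + ((Finset.univ.filter (fun j' => i < j')).card : ℝ) * m := by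
          rw [Finset.sum_add_distrib, Finset.sum_const, nsmul_eq_mul]
        have hsingle : VI (x i - x j) + m ≤
            ∑ j' ∈ Finset.univ.filter (fun j' => i < j'), (VI (x i - x j') + m) :=
          Finset.single_le_sum (f := fun j' => VI (x i - x j') + m)
            (fun j' hj' => by
              have := hterm i j' (Finset.mem_filter.mp hj').2.ne
              dsimp only
              linarith) hjmem
        have h2 : ((Finset.univ.filter (fun j' => i < j')).card : ℝ) ≤ (N : ℝ) := by
          exact_mod_cast le_trans (Finset.card_filter_le _ _) (by simp)
        rw [hs] at hsingle
        nlinarith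
      have h2 : g i + (N : ℝ) * m ≤ (∑ i', g i') + (N : ℝ) * ((N : ℝ) * m) + (N : ℝ) * m := by
        have hsingle : g i + (N : ℝ) * m ≤ ∑ i' : Fin N, (g i' + (N : ℝ) * m) :=
          Finset.single_le_sum (f := fun i' => g i' + (N : ℝ) * m)
            (fun i' _ => by have := hg i'; linarith) (Finset.mem_univ i)
        rw [Finset.sum_add_distrib, Finset.sum_const, nsmul_eq_mul] at hsingle
        simp only [Finset.card_univ, Fintype.card_fin] at hsingle
        linarith
      have hS2R : (∑ i', g i') ≤ R := by linarith
      have hN1 : (1 : ℝ) ≤ (N : ℝ) := by exact_mod_cast hN.trans' (by norm_num)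
      have : (N : ℝ) * m ≤ (N : ℝ) ^ 2 * m := by
        have h9 : 0 ≤ ((N : ℝ) - 1) * ((N : ℝ) * m) := mul_nonneg (by linarith) hNm
        nlinarith
      simp only [hKdef]
      nlinarith
  -- choose ρ and r
  set ρ : ℝ := Real.sqrt (2 * (R + (N : ℝ) ^ 2 * m) / a₀) with hρdef
  have hρpos : 0 < ρ := Real.sqrt_pos.mpr (by positivity)
  set c : ℝ := (B / (2 * Knum)) ^ (β⁻¹) with hcdef
  have hcpos : 0 < c := Real.rpow_pos_of_pos (by positivity) _
  set r : ℝ := min δ₀ c with hrdef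
  have hrpos : 0 < r := lt_min hδ₀pos hcpos
  have main : ∀ x : PiLp 2 (fun _ : Fin N => (EuclideanSpace ℝ (Fin d))), (∀ i j : Fin N, i ≠ j → x i ≠ x j) →
      V x ≤ R → ‖x‖ ≤ ρ ∧ ∀ i j : Fin N, i ≠ j → r ≤ ‖x i - x j‖ := by
    intro x hx hxR
    obtain ⟨hb1, hb2⟩ := key x hx hxR
    constructor
    · have hn2 : ‖x‖ ^ 2 = ∑ i, ‖x i‖ ^ 2 := PiLp.norm_sq_eq_of_L2 _ x
      have : ‖x‖ = Real.sqrt (‖x‖ ^ 2) := (Real.sqrt_sq (norm_nonneg x)).symm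
      rw [this, hρdef]
      exact Real.sqrt_le_sqrt (by rw [hn2]; exact hb1)
    · -- pair separation, first for i < j
      have hlt : ∀ i j : Fin N, i < j → r ≤ ‖x i - x j‖ := by
        intro i j hij
        by_contra hcon
        push_neg at hcon
        set y : (EuclideanSpace ℝ (Fin d)) := x i - x j with hydef
        have hy0 : y ≠ 0 := sub_ne_zero.mpr (hx i j hij.ne)
        have hny : 0 < ‖y‖ := norm_pos_iff.mpr hy0
        have hyδ₀ : ‖y‖ < δ₀ := lt_of_lt_of_le hcon (min_le_left _ _)
        have hyc : ‖y‖ < c := lt_of_lt_of_le hcon (min_le_right _ _)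
        have hVIy : B / 2 * ‖y‖ ^ (-β) ≤ VI y := hnear y hy0 (hyδ₀.trans hδ₀δ)
        have hcβ : c ^ β = B / (2 * Knum) := by
          rw [hcdef, ← Real.rpow_mul (by positivity : (0:ℝ) ≤ B / (2 * Knum)),
            inv_mul_cancel₀ hβ.ne', Real.rpow_one]
        have hyβ : ‖y‖ ^ β < B / (2 * Knum) := by
          rw [← hcβ]
          exact Real.rpow_lt_rpow (norm_nonneg y) hyc hβ
        have hyβpos : 0 < ‖y‖ ^ β := Real.rpow_pos_of_pos hny _
        have hpowneg : 0 < ‖y‖ ^ (-β) := Real.rpow_pos_of_pos hny _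
        have hp1 : ‖y‖ ^ β * ‖y‖ ^ (-β) = 1 := by
          rw [← Real.rpow_add hny]; simp
        have hq : ‖y‖ ^ β * (2 * Knum) < B := (lt_div_iff₀ (by positivity)).mp hyβ
        have h7 := mul_lt_mul_of_pos_right hq hpowneg
        have h8 : ‖y‖ ^ β * (2 * Knum) * ‖y‖ ^ (-β) = 2 * Knum := by
          rw [mul_comm (‖y‖ ^ β) (2 * Knum), mul_assoc, hp1, mul_one]
        rw [h8] at h7
        have hlast : Knum < B / 2 * ‖y‖ ^ (-β) := by linarith
        have := hb2 i j hij
        linarith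
      intro i j hij
      rcases hij.lt_or_gt with h | h
      · exact hlt i j h
      · rw [norm_sub_rev]; exact hlt j i h
  refine ⟨⟨ρ, hρpos, r, hrpos, main⟩, ?_, ?_⟩
  all_goals {
    set S := {x : PiLp 2 (fun _ : Fin N => (EuclideanSpace ℝ (Fin d))) | (∀ i j : Fin N, i ≠ j → x i ≠ x j) ∧ V x < R}
      with hSdef
    set T := {x : PiLp 2 (fun _ : Fin N => (EuclideanSpace ℝ (Fin d))) | ‖x‖ ≤ ρ ∧ ∀ i j : Fin N, i ≠ j → r ≤ ‖x i - x j‖}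
      with hTdef
    have hTclosed : IsClosed T := by
      have h1 : IsClosed {x : PiLp 2 (fun _ : Fin N => (EuclideanSpace ℝ (Fin d))) | ‖x‖ ≤ ρ} :=
        isClosed_le (by fun_prop) continuous_const
      have h2 : ∀ i j : Fin N, IsClosed {x : PiLp 2 (fun _ : Fin N => (EuclideanSpace ℝ (Fin d))) | r ≤ ‖x i - x j‖} := by
        intro i j
        exact isClosed_le continuous_const (by fun_prop)
      have : T = {x : PiLp 2 (fun _ : Fin N => (EuclideanSpace ℝ (Fin d))) | ‖x‖ ≤ ρ} ∩
          ⋂ (i : Fin N), ⋂ (j : Fin N), ⋂ (_ : i ≠ j),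
            {x : PiLp 2 (fun _ : Fin N => (EuclideanSpace ℝ (Fin d))) | r ≤ ‖x i - x j‖} := by
        ext x
        simp only [hTdef, Set.mem_inter_iff, Set.mem_setOf_eq, Set.mem_iInter]
      rw [this]
      exact h1.inter (isClosed_iInter fun i => isClosed_iInter fun j =>
        isClosed_iInter fun _ => h2 i j)
    have hTbdd : Bornology.IsBounded T := by
      apply (Metric.isBounded_closedBall (x := (0 : PiLp 2 (fun _ : Fin N => (EuclideanSpace ℝ (Fin d))))) (r := ρ)).subset
      intro x hx
      simpa [Metric.mem_closedBall, dist_eq_norm] using hx.1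
    have hTcomp : IsCompact T := Metric.isCompact_of_isClosed_isBounded hTclosed hTbdd
    have hST : S ⊆ T := fun x hx => main x hx.1 hx.2.le
    have hclT : closure S ⊆ T := closure_minimal hST hTclosed
    have hTO : T ⊆ {x : PiLp 2 (fun _ : Fin N => (EuclideanSpace ℝ (Fin d))) | ∀ i j : Fin N, i ≠ j → x i ≠ x j} := by
      intro x hx i j hij heq
      have := hx.2 i j hij
      rw [heq, sub_self, norm_zero] at this
      linarith
    first
    | exact hTcomp.of_isClosed_subset isClosed_closure hclT
    | exact hclT.trans hTO
  }
end

section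
/- Let d ≥ 2, N ≥ 2, a₀ > 0, and let V_I : ℝ^d∖{0} → ℝ be continuous of the form V_I(y) = B|y|^{−β} + Φ(y) with B, β > 0, where Φ is continuous, Φ is bounded on {|y| > r_Φ} for some r_Φ > 0, and |y|^β Φ(y) → 0 as y → 0. Define, on O_V = {x ∈ (ℝ^d)^N : x^i ≠ x^j for i ≠ j}, V(x) = Σ_i a₀|x^i|²/2 + Σ_{i<j} V_I(x^i − x^j), H_GL(x,v,z) = V(x) + |v|²/2 + |z|²/2 on E = O_V × ℝ^{dN} × ℝ^{dN}, and G(x) = (G¹(x),…,G^N(x)) with G^i(x) = Σ_{j≠i} (x^i − x^j)/|x^i − x^j|. Let ℏ, 𝔟 > 0 with ℏ > max(𝔟, 𝔟/a₀), and set F₀(x,v,z) = ℏ H_GL(x,v,z) + 𝔟⟨x,v⟩ − 𝔟⟨v, G(x)⟩. Then there exists C > 0 such that for all (x,v,z) ∈ E: F₀(x,v,z) ≥ ((a₀ℏ − 𝔟)/2)|x|² + (Bℏ/2) Σ_{i<j} |x^i − x^j|^{−β} + ((ℏ − 𝔟)/2)|v|² − 𝔟(N−1) Σ_{i=1}^N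 |v^i| + (ℏ/2)|z|² − C. In particular, F₀ is bounded from below on E. -/
open scoped InnerProductSpace

set_option maxHeartbeats 1600000 in
/-- For `V(x) = Σ_i a₀|x^i|²/2 + Σ_{i<j} V_I(x^i-x^j)` with singular
`V_I(y) = B|y|^{-β} + Φ(y)`, `G^i(x) = Σ_{j≠i} (x^i-x^j)/|x^i-x^j|`, and
`F₀ = ℏ H_GL + 𝔟⟨x, v⟩ - 𝔟⟨v, G(x)⟩` with `ℏ > max(𝔟, 𝔟/a₀) > 0`, there is `C > 0` such
that on the collision-free phase space
`F₀(x,v,z) ≥ ((a₀ℏ-𝔟)/2)|x|² + (Bℏ/2)Σ_{i<j}|x^i-x^j|^{-β} + ((ℏ-𝔟)/2)|v|²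
- 𝔟(N-1)Σ_i|v^i| + (ℏ/2)|z|² - C`; in particular `F₀` is bounded from below there. -/
theorem stmt_18 {d N : ℕ} (hd : 2 ≤ d) (hN : 2 ≤ N) (a₀ B β : ℝ)
    (ha₀ : 0 < a₀) (hB : 0 < B) (hβ : 0 < β)
    (VI Φ : EuclideanSpace ℝ (Fin d) → ℝ)
    (hVIcont : ContinuousOn VI {y : EuclideanSpace ℝ (Fin d) | y ≠ 0})
    (hform : ∀ y : EuclideanSpace ℝ (Fin d), y ≠ 0 → VI y = B * ‖y‖ ^ (-β) + Φ y)
    (hΦcont : ContinuousOn Φ {y : EuclideanSpace ℝ (Fin d) | y ≠ 0})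
    (rΦ : ℝ) (hrΦ : 0 < rΦ) (MΦ : ℝ)
    (hΦbdd : ∀ y : EuclideanSpace ℝ (Fin d), rΦ < ‖y‖ → |Φ y| ≤ MΦ)
    (hΦ0 : Filter.Tendsto (fun y : EuclideanSpace ℝ (Fin d) => ‖y‖ ^ β * Φ y)
      (nhdsWithin 0 {y : EuclideanSpace ℝ (Fin d) | y ≠ 0}) (nhds 0))
    (V : Conf d N → ℝ)
    (hV : ∀ x : Conf d N,
      V x = (∑ i : Fin N, a₀ * ‖x i‖ ^ 2 / 2)
        + ∑ i : Fin N, ∑ j ∈ Finset.univ.filter (fun j => i < j), VI (x i - x j))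
    (G : Conf d N → Conf d N)
    (hG : ∀ x : Conf d N, ∀ i : Fin N,
      G x i = ∑ j ∈ Finset.univ.filter (fun j => j ≠ i), ‖x i - x j‖⁻¹ • (x i - x j))
    (hbar 𝔟 : ℝ) (h𝔟 : 0 < 𝔟) (hhbar : max 𝔟 (𝔟 / a₀) < hbar) :
    (∃ C > 0, ∀ x v z : Conf d N, (∀ i j : Fin N, i ≠ j → x i ≠ x j) →
      ((a₀ * hbar - 𝔟) / 2) * ‖x‖ ^ 2
          + (B * hbar / 2) * ∑ i : Fin N, ∑ j ∈ Finset.univ.filter (fun j => i < j),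
              ‖x i - x j‖ ^ (-β)
          + ((hbar - 𝔟) / 2) * ‖v‖ ^ 2 - 𝔟 * ((N : ℝ) - 1) * ∑ i : Fin N, ‖v i‖
          + (hbar / 2) * ‖z‖ ^ 2 - C
        ≤ hbar * (V x + ‖v‖ ^ 2 / 2 + ‖z‖ ^ 2 / 2)
            + 𝔟 * ⟪x, v⟫_ℝ - 𝔟 * ⟪v, G x⟫_ℝ) ∧
    ∃ m : ℝ, ∀ x v z : Conf d N, (∀ i j : Fin N, i ≠ j → x i ≠ x j) →
      m ≤ hbar * (V x + ‖v‖ ^ 2 / 2 + ‖z‖ ^ 2 / 2) + 𝔟 * ⟪x, v⟫_ℝ - 𝔟 * ⟪v, G x⟫_ℝ := by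
  have hℏ𝔟 : 𝔟 < hbar := lt_of_le_of_lt (le_max_left _ _) hhbar
  have hℏ : 0 < hbar := h𝔟.trans hℏ𝔟
  have ha₀ℏ : 𝔟 < a₀ * hbar := by
    have h := lt_of_le_of_lt (le_max_right 𝔟 (𝔟 / a₀)) hhbar
    calc 𝔟 = a₀ * (𝔟 / a₀) := by field_simp
    _ < a₀ * hbar := by exact mul_lt_mul_of_pos_left h ha₀
  -- δ from hΦ0
  rw [Metric.tendsto_nhdsWithin_nhds] at hΦ0
  obtain ⟨δ, hδpos, hδ'⟩ := hΦ0 (B/2) (by positivity)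
  -- M' from compactness on the annulus
  have hAcomp : IsCompact {y : EuclideanSpace ℝ (Fin d) | δ ≤ ‖y‖ ∧ ‖y‖ ≤ rΦ} := by
    have h1 : IsCompact (Metric.closedBall (0 : EuclideanSpace ℝ (Fin d)) rΦ) :=
      isCompact_closedBall _ _
    have : {y : EuclideanSpace ℝ (Fin d) | δ ≤ ‖y‖ ∧ ‖y‖ ≤ rΦ}
        = Metric.closedBall 0 rΦ ∩ {y | δ ≤ ‖y‖} := by
      ext y; simp [Metric.mem_closedBall, dist_zero_right, and_comm]
    rw [this]
    exact h1.inter_right (isClosed_le continuous_const continuous_norm)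
  have hAsub : {y : EuclideanSpace ℝ (Fin d) | δ ≤ ‖y‖ ∧ ‖y‖ ≤ rΦ}
      ⊆ {y : EuclideanSpace ℝ (Fin d) | y ≠ 0} := by
    rintro y ⟨h1, _⟩ rfl
    simp at h1; linarith
  obtain ⟨M', hM'⟩ := hAcomp.exists_bound_of_continuousOn (hΦcont.mono hAsub)
  set M : ℝ := max (max M' MΦ) 0 with hMdef
  have hM0 : 0 ≤ M := le_max_right _ _
  have key : ∀ y : EuclideanSpace ℝ (Fin d), y ≠ 0 →
      (B/2) * ‖y‖ ^ (-β) - M ≤ VI y := by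
    intro y hy
    have hpos : 0 < ‖y‖ := norm_pos_iff.mpr hy
    have hrp : 0 < ‖y‖ ^ (-β) := Real.rpow_pos_of_pos hpos _
    rw [hform y hy]
    rcases lt_or_ge ‖y‖ δ with hlt | hge
    · have h := hδ' hy (by simpa [dist_zero_right] using hlt)
      rw [Real.dist_eq, sub_zero] at h
      have h2 : -(B/2) ≤ ‖y‖ ^ β * Φ y := by
        have := abs_lt.mp h; linarith [this.1]
      have h3 : -((B/2) * ‖y‖ ^ (-β)) ≤ Φ y := by
        have hb : 0 < ‖y‖ ^ β := Real.rpow_pos_of_pos hpos _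
        have hinv : ‖y‖ ^ (-β) = (‖y‖ ^ β)⁻¹ := by
          rw [Real.rpow_neg hpos.le]
        rw [hinv, neg_le]
        nlinarith [mul_le_mul_of_nonneg_right h2 (le_of_lt (inv_pos.mpr hb)),
          mul_inv_cancel₀ (ne_of_gt hb)]
      nlinarith
    · have hΦle : |Φ y| ≤ M := by
        rcases le_or_gt ‖y‖ rΦ with hle | hgt
        · exact (hM' y ⟨hge, hle⟩).trans ((le_max_left _ _).trans (le_max_left _ _))
        · exact (hΦbdd y hgt).trans ((le_max_right M' MΦ).trans (le_max_left _ _))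
      have := abs_le.mp hΦle
      nlinarith
  -- the pairwise sum bound
  have hPair : ∀ x : Conf d N, (∀ i j : Fin N, i ≠ j → x i ≠ x j) →
      (B/2) * (∑ i : Fin N, ∑ j ∈ Finset.univ.filter (fun j => i < j), ‖x i - x j‖ ^ (-β))
        - (N:ℝ)^2 * M
        ≤ ∑ i : Fin N, ∑ j ∈ Finset.univ.filter (fun j => i < j), VI (x i - x j) := by
    intro x hx
    have h1 : ∑ i : Fin N, ∑ j ∈ Finset.univ.filter (fun j => i < j),
        ((B/2) * ‖x i - x j‖ ^ (-β) - M)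
        ≤ ∑ i : Fin N, ∑ j ∈ Finset.univ.filter (fun j => i < j), VI (x i - x j) := by
      refine Finset.sum_le_sum fun i _ => Finset.sum_le_sum fun j hj => ?_
      have hij : i ≠ j := ne_of_lt (Finset.mem_filter.mp hj).2
      exact key _ (sub_ne_zero.mpr (hx i j hij))
    refine le_trans ?_ h1
    have h3 : ∑ i : Fin N, ∑ _j ∈ Finset.univ.filter (fun j => i < j), M ≤ (N:ℝ)^2 * M := by
      calc ∑ i : Fin N, ∑ _j ∈ Finset.univ.filter (fun j => i < j), M
          ≤ ∑ _i : Fin N, ∑ _j : Fin N, M :=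
            Finset.sum_le_sum fun i _ => Finset.sum_le_sum_of_subset_of_nonneg
              (Finset.filter_subset _ _) (fun _ _ _ => hM0)
        _ = (N:ℝ)^2 * M := by simp [Finset.sum_const]; ring
    have h4 : ∑ i : Fin N, ∑ j ∈ Finset.univ.filter (fun j => i < j),
        ((B/2) * ‖x i - x j‖ ^ (-β) - M)
        = (B/2) * (∑ i : Fin N, ∑ j ∈ Finset.univ.filter (fun j => i < j), ‖x i - x j‖ ^ (-β))
          - ∑ i : Fin N, ∑ _j ∈ Finset.univ.filter (fun j => i < j), M := by
      rw [Finset.mul_sum, ← Finset.sum_sub_distrib]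
      refine Finset.sum_congr rfl fun i _ => ?_
      rw [Finset.mul_sum, ← Finset.sum_sub_distrib]
    linarith
  -- bound on G
  have hGb : ∀ x : Conf d N, (∀ i j : Fin N, i ≠ j → x i ≠ x j) → ∀ i : Fin N,
      ‖G x i‖ ≤ (N:ℝ) - 1 := by
    intro x hx i
    rw [hG x i]
    calc ‖∑ j ∈ Finset.univ.filter (fun j => j ≠ i), ‖x i - x j‖⁻¹ • (x i - x j)‖
        ≤ ∑ j ∈ Finset.univ.filter (fun j => j ≠ i), ‖‖x i - x j‖⁻¹ • (x i - x j)‖ :=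
          norm_sum_le _ _
      _ ≤ ∑ _j ∈ Finset.univ.filter (fun j => j ≠ i), 1 := by
          refine Finset.sum_le_sum fun j hj => ?_
          rw [norm_smul, norm_inv, norm_norm]
          have h0 : x i - x j ≠ 0 :=
            sub_ne_zero.mpr (hx i j (Ne.symm (Finset.mem_filter.mp hj).2))
          rw [inv_mul_cancel₀ (by simpa using norm_ne_zero_iff.mpr h0)]
      _ = (N:ℝ) - 1 := by
          rw [Finset.sum_const, Finset.filter_ne' Finset.univ i,
            Finset.card_erase_of_mem (Finset.mem_univ i)]
          simp only [Finset.card_univ, Fintype.card_fin, nsmul_eq_mul, mul_one]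
          rw [Nat.cast_sub (by omega)]
          simp
  have hip2 : ∀ x v : Conf d N, (∀ i j : Fin N, i ≠ j → x i ≠ x j) →
      ⟪v, G x⟫_ℝ ≤ ((N:ℝ) - 1) * ∑ i : Fin N, ‖v i‖ := by
    intro x v hx
    rw [PiLp.inner_apply]
    rw [Finset.mul_sum]
    refine Finset.sum_le_sum fun i _ => ?_
    calc ⟪v i, G x i⟫_ℝ ≤ ‖v i‖ * ‖G x i‖ := real_inner_le_norm _ _
      _ ≤ ‖v i‖ * ((N:ℝ) - 1) := by
          exact mul_le_mul_of_nonneg_left (hGb x hx i) (norm_nonneg _)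
      _ = ((N:ℝ) - 1) * ‖v i‖ := mul_comm _ _
  -- assembly
  set C : ℝ := hbar * ((N:ℝ)^2 * M) + 1 with hCdef
  have hCpos : 0 < C := by
    have h0 : 0 ≤ hbar * ((N:ℝ)^2 * M) :=
      mul_nonneg hℏ.le (mul_nonneg (by positivity) hM0)
    linarith
  have main : ∀ x v z : Conf d N, (∀ i j : Fin N, i ≠ j → x i ≠ x j) →
      ((a₀ * hbar - 𝔟) / 2) * ‖x‖ ^ 2
          + (B * hbar / 2) * ∑ i : Fin N, ∑ j ∈ Finset.univ.filter (fun j => i < j),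
              ‖x i - x j‖ ^ (-β)
          + ((hbar - 𝔟) / 2) * ‖v‖ ^ 2 - 𝔟 * ((N : ℝ) - 1) * ∑ i : Fin N, ‖v i‖
          + (hbar / 2) * ‖z‖ ^ 2 - C
        ≤ hbar * (V x + ‖v‖ ^ 2 / 2 + ‖z‖ ^ 2 / 2)
            + 𝔟 * ⟪x, v⟫_ℝ - 𝔟 * ⟪v, G x⟫_ℝ := by
    intro x v z hx
    have hVx : V x = a₀/2 * ‖x‖^2
        + ∑ i : Fin N, ∑ j ∈ Finset.univ.filter (fun j => i < j), VI (x i - x j) := by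
      rw [hV x, PiLp.norm_sq_eq_of_L2, Finset.mul_sum]
      congr 1
      exact Finset.sum_congr rfl fun i _ => by ring
    have hip1 : -(‖x‖^2/2 + ‖v‖^2/2) ≤ ⟪x, v⟫_ℝ := by
      have h1 := abs_real_inner_le_norm x v
      have h2 := neg_abs_le ⟪x, v⟫_ℝ
      nlinarith [sq_nonneg (‖x‖ - ‖v‖)]
    have hhP := mul_le_mul_of_nonneg_left (hPair x hx) hℏ.le
    have hhi1 := mul_le_mul_of_nonneg_left hip1 h𝔟.le
    have hhi2 := mul_le_mul_of_nonneg_left (hip2 x v hx) h𝔟.le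
    rw [hVx, hCdef]
    nlinarith [hhP, hhi1, hhi2]
  refine ⟨⟨C, hCpos, main⟩, ?_⟩
  refine ⟨-C - (𝔟 * ((N:ℝ) - 1) * (N:ℝ))^2 / (2*(hbar - 𝔟)), fun x v z hx => ?_⟩
  have h1 := main x v z hx
  have hX : 0 ≤ ((a₀ * hbar - 𝔟) / 2) * ‖x‖ ^ 2 :=
    mul_nonneg (by linarith) (sq_nonneg _)
  have hS : 0 ≤ (B * hbar / 2) * ∑ i : Fin N, ∑ j ∈ Finset.univ.filter (fun j => i < j),
      ‖x i - x j‖ ^ (-β) := by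
    refine mul_nonneg (by positivity) ?_
    exact Finset.sum_nonneg fun i _ => Finset.sum_nonneg fun j _ =>
      Real.rpow_nonneg (norm_nonneg _) _
  have hZ : 0 ≤ (hbar / 2) * ‖z‖ ^ 2 := mul_nonneg (by positivity) (sq_nonneg _)
  have hSv : ∑ i : Fin N, ‖v i‖ ≤ (N:ℝ) * ‖v‖ := by
    have h2 : ∀ i : Fin N, ‖v i‖ ≤ ‖v‖ := by
      intro i
      have h4 : ‖v‖^2 = ∑ j : Fin N, ‖v j‖^2 :=
        PiLp.norm_sq_eq_of_L2 (fun _ : Fin N => EuclideanSpace ℝ (Fin d)) v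
      have h3 : ‖v i‖^2 ≤ ∑ j : Fin N, ‖v j‖^2 :=
        Finset.single_le_sum (f := fun j : Fin N => ‖v j‖^2)
          (fun j _ => sq_nonneg _) (Finset.mem_univ i)
      nlinarith [norm_nonneg v, norm_nonneg (v i)]
    calc ∑ i : Fin N, ‖v i‖ ≤ ∑ _i : Fin N, ‖v‖ := Finset.sum_le_sum fun i _ => h2 i
      _ = (N:ℝ) * ‖v‖ := by simp [Finset.sum_const]
  have hN1 : (1:ℝ) ≤ (N:ℝ) - 1 := by
    have : (2:ℝ) ≤ (N:ℝ) := by exact_mod_cast hN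
    linarith
  have hbN : 0 ≤ 𝔟 * ((N:ℝ) - 1) := mul_nonneg h𝔟.le (by linarith)
  have hpos2 : 0 < 2*(hbar - 𝔟) := by linarith
  have h5 : 𝔟 * ((N:ℝ) - 1) * ∑ i : Fin N, ‖v i‖
      ≤ 𝔟 * ((N:ℝ) - 1) * ((N:ℝ) * ‖v‖) := mul_le_mul_of_nonneg_left hSv hbN
  have key2 : -((𝔟 * ((N:ℝ) - 1) * (N:ℝ))^2 / (2*(hbar - 𝔟)))
      ≤ ((hbar - 𝔟) / 2) * ‖v‖ ^ 2 - 𝔟 * ((N:ℝ) - 1) * ((N:ℝ) * ‖v‖) := by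
    have h6 : (𝔟 * ((N:ℝ) - 1) * (N:ℝ))^2 / (2*(hbar - 𝔟)) * (2*(hbar - 𝔟))
        = (𝔟 * ((N:ℝ) - 1) * (N:ℝ))^2 := div_mul_cancel₀ _ (ne_of_gt hpos2)
    nlinarith [sq_nonneg ((hbar - 𝔟) * ‖v‖ - 𝔟 * ((N:ℝ) - 1) * (N:ℝ)), h6, hpos2]
  linarith
end

section
/- Let d ≥ 1, N ≥ 2, q > 1, and let x¹, …, x^N ∈ ℝ^d be pairwise distinct points. Then Σ_{i=1}^N ⟨ Σ_{j≠i} (x^i − x^j)/|x^i − x^j|^q , Σ_{k≠i} (x^i − x^k)/|x^i − x^k| ⟩ ≥ Σ_{i,j=1, i≠j}^N |x^i − x^j|^{1−q}. -/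
open scoped InnerProductSpace

lemma aux_geom {E : Type*} [NormedAddCommGroup E] [InnerProductSpace ℝ E]
    (a b : E) (ha : a ≠ 0) (hb : b ≠ 0) :
    0 ≤ ⟪a + b, ‖a‖⁻¹ • a + ‖b‖⁻¹ • b⟫_ℝ := by
  have hna : 0 < ‖a‖ := norm_pos_iff.mpr ha
  have hnb : 0 < ‖b‖ := norm_pos_iff.mpr hb
  have h1 : ⟪a + b, ‖a‖⁻¹ • a + ‖b‖⁻¹ • b⟫_ℝ
      = ‖a‖⁻¹ * (‖a‖^2 + ⟪a,b⟫_ℝ) + ‖b‖⁻¹ * (⟪a,b⟫_ℝ + ‖b‖^2) := by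
    rw [inner_add_right, inner_smul_right, inner_smul_right, inner_add_left, inner_add_left,
      real_inner_self_eq_norm_sq, real_inner_self_eq_norm_sq, real_inner_comm b a]
  have h2 : -(‖a‖ * ‖b‖) ≤ ⟪a,b⟫_ℝ := neg_le_of_abs_le (abs_real_inner_le_norm a b)
  rw [h1]
  have e1 : ‖a‖⁻¹ * ‖a‖ = 1 := inv_mul_cancel₀ hna.ne'
  have e2 : ‖b‖⁻¹ * ‖b‖ = 1 := inv_mul_cancel₀ hnb.ne'
  nlinarith [mul_pos (inv_pos.mpr hna) hnb, mul_pos (inv_pos.mpr hnb) hna,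
    inv_pos.mpr hna, inv_pos.mpr hnb]

/-- For pairwise distinct `x¹, …, x^N ∈ ℝ^d` and `q > 1`:
`Σ_i ⟨Σ_{j≠i} (x^i-x^j)/|x^i-x^j|^q, Σ_{k≠i} (x^i-x^k)/|x^i-x^k|⟩ ≥ Σ_{i≠j} |x^i-x^j|^{1-q}`. -/
theorem stmt_19 {d N : ℕ} (hd : 1 ≤ d) (hN : 2 ≤ N) (q : ℝ) (hq : 1 < q)
    (x : Fin N → EuclideanSpace ℝ (Fin d)) (hx : ∀ i j : Fin N, i ≠ j → x i ≠ x j) :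
    ∑ i : Fin N, ∑ j ∈ Finset.univ.filter (fun j => j ≠ i), ‖x i - x j‖ ^ (1 - q)
      ≤ ∑ i : Fin N,
          ⟪∑ j ∈ Finset.univ.filter (fun j => j ≠ i), (‖x i - x j‖ ^ q)⁻¹ • (x i - x j),
            ∑ k ∈ Finset.univ.filter (fun k => k ≠ i), ‖x i - x k‖⁻¹ • (x i - x k)⟫_ℝ := by
  classical
  set g : Fin N → Fin N → EuclideanSpace ℝ (Fin d) :=
    fun i k => ‖x i - x k‖⁻¹ • (x i - x k) with hg
  set v : Fin N → EuclideanSpace ℝ (Fin d) :=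
    fun i => ∑ k ∈ Finset.univ.filter (fun k => k ≠ i), g i k with hv
  have hne : ∀ i j : Fin N, i ≠ j → x i - x j ≠ 0 := fun i j h => sub_ne_zero.mpr (hx i j h)
  have hr : ∀ i j : Fin N, i ≠ j → (0:ℝ) < ‖x i - x j‖ :=
    fun i j h => norm_pos_iff.mpr (hne i j h)
  have hrw : ∀ i : Fin N,
      ⟪∑ j ∈ Finset.univ.filter (fun j => j ≠ i), (‖x i - x j‖ ^ q)⁻¹ • (x i - x j), v i⟫_ℝ
      = ∑ j ∈ Finset.univ.filter (fun j => j ≠ i),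
          (‖x i - x j‖ ^ q)⁻¹ * ⟪x i - x j, v i⟫_ℝ := by
    intro i
    rw [sum_inner]
    exact Finset.sum_congr rfl fun j _ => real_inner_smul_left _ _ _
  set T : Fin N → Fin N → ℝ := fun i j =>
    (‖x i - x j‖ ^ q)⁻¹ * ⟪x i - x j, v i⟫_ℝ - ‖x i - x j‖ ^ (1 - q) with hT
  -- KEY pairwise inequality
  have key : ∀ i j : Fin N, j ≠ i → 0 ≤ T i j + T j i := by
    intro i j hji
    have hij : i ≠ j := hji.symm
    have hrij : (0:ℝ) < ‖x i - x j‖ := hr i j hij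
    have hnrev : ‖x j - x i‖ = ‖x i - x j‖ := norm_sub_rev _ _
    -- compute the sum of the two inner products
    set s : Finset (Fin N) := Finset.univ.filter (fun k => k ≠ i ∧ k ≠ j) with hs
    have hfi : Finset.univ.filter (fun k => k ≠ i) = insert j s := by
      ext k
      simp only [Finset.mem_filter, Finset.mem_univ, true_and, Finset.mem_insert, hs]
      constructor
      · intro h
        by_cases hkj : k = j
        · exact Or.inl hkj
        · exact Or.inr ⟨h, hkj⟩
      · rintro (rfl | ⟨h, -⟩)
        · exact hji
        · exact h
    have hfj : Finset.univ.filter (fun k => k ≠ j) = insert i s := by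
      ext k
      simp only [Finset.mem_filter, Finset.mem_univ, true_and, Finset.mem_insert, hs]
      constructor
      · intro h
        by_cases hki : k = i
        · exact Or.inl hki
        · exact Or.inr ⟨hki, h⟩
      · rintro (rfl | ⟨-, h⟩)
        · exact hij
        · exact h
    have hjs : j ∉ s := by simp [hs]
    have his : i ∉ s := by simp [hs]
    have hvi : ⟪x i - x j, v i⟫_ℝ = ⟪x i - x j, g i j⟫_ℝ + ∑ k ∈ s, ⟪x i - x j, g i k⟫_ℝ := by
      rw [hv]
      simp only
      rw [hfi, Finset.sum_insert hjs, inner_add_right, inner_sum]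
    have hvj : ⟪x j - x i, v j⟫_ℝ = ⟪x j - x i, g j i⟫_ℝ + ∑ k ∈ s, ⟪x j - x i, g j k⟫_ℝ := by
      rw [hv]
      simp only
      rw [hfj, Finset.sum_insert his, inner_add_right, inner_sum]
    have hgij : ⟪x i - x j, g i j⟫_ℝ = ‖x i - x j‖ := by
      rw [hg]
      simp only
      rw [real_inner_smul_right, real_inner_self_eq_norm_sq]
      field_simp
    have hgji : ⟪x j - x i, g j i⟫_ℝ = ‖x i - x j‖ := by
      rw [hg]
      simp only
      rw [real_inner_smul_right, real_inner_self_eq_norm_sq, hnrev]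
      field_simp
    have hcross : ∀ k ∈ s, 0 ≤ ⟪x i - x j, g i k⟫_ℝ + ⟪x j - x i, g j k⟫_ℝ := by
      intro k hk
      have hki : k ≠ i := (Finset.mem_filter.mp hk).2.1
      have hkj : k ≠ j := (Finset.mem_filter.mp hk).2.2
      have hik : i ≠ k := hki.symm
      have ha : x i - x k ≠ 0 := hne i k hik
      have hb : x k - x j ≠ 0 := hne k j hkj
      have h0 := aux_geom (x i - x k) (x k - x j) ha hb
      have e1 : x i - x k + (x k - x j) = x i - x j := by abel
      have e2 : ‖x i - x k‖⁻¹ • (x i - x k) = g i k := rfl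
      have e3 : ‖x k - x j‖⁻¹ • (x k - x j) = -g j k := by
        rw [hg]
        simp only
        rw [show x j - x k = -(x k - x j) by abel, norm_neg, smul_neg, neg_neg]
      rw [e1, e2, e3] at h0
      have h0' : 0 ≤ ⟪x i - x j, g i k⟫_ℝ + ⟪x i - x j, -g j k⟫_ℝ := by
        rw [← inner_add_right]; exact h0
      rw [inner_neg_right] at h0'
      have : ⟪x j - x i, g j k⟫_ℝ = -⟪x i - x j, g j k⟫_ℝ := by
        rw [show x j - x i = -(x i - x j) by abel, inner_neg_left]
      linarith
    have hsum : 2 * ‖x i - x j‖ ≤ ⟪x i - x j, v i⟫_ℝ + ⟪x j - x i, v j⟫_ℝ := by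
      rw [hvi, hvj, hgij, hgji]
      have : 0 ≤ ∑ k ∈ s, (⟪x i - x j, g i k⟫_ℝ + ⟪x j - x i, g j k⟫_ℝ) :=
        Finset.sum_nonneg hcross
      rw [Finset.sum_add_distrib] at this
      linarith
    -- convert to T-form
    have hq' : (0:ℝ) < ‖x i - x j‖ ^ q := Real.rpow_pos_of_pos hrij q
    have hpow : ‖x i - x j‖ ^ (1 - q) = ‖x i - x j‖ * (‖x i - x j‖ ^ q)⁻¹ := by
      rw [Real.rpow_sub hrij, Real.rpow_one]
      ring
    rw [hT]
    simp only
    rw [hnrev, hpow]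
    have hinv : (0:ℝ) ≤ (‖x i - x j‖ ^ q)⁻¹ := (inv_pos.mpr hq').le
    nlinarith [mul_le_mul_of_nonneg_left hsum hinv]
  -- symmetrization
  have hswap : ∑ i : Fin N, ∑ j ∈ Finset.univ.filter (fun j => j ≠ i), T j i
      = ∑ i : Fin N, ∑ j ∈ Finset.univ.filter (fun j => j ≠ i), T i j :=
    Finset.sum_comm' (fun a b => by
      simp only [Finset.mem_filter, Finset.mem_univ, true_and]
      exact ⟨fun h => ⟨h.symm, trivial⟩, fun h => h.1.symm⟩)
  have goal2 : (0:ℝ) ≤ ∑ i : Fin N, ∑ j ∈ Finset.univ.filter (fun j => j ≠ i), T i j := by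
    have h2 : (0:ℝ) ≤ ∑ i : Fin N, ∑ j ∈ Finset.univ.filter (fun j => j ≠ i), (T i j + T j i) :=
      Finset.sum_nonneg fun i _ => Finset.sum_nonneg fun j hj =>
        key i j (Finset.mem_filter.mp hj).2
    have h3 : ∑ i : Fin N, ∑ j ∈ Finset.univ.filter (fun j => j ≠ i), (T i j + T j i)
        = (∑ i : Fin N, ∑ j ∈ Finset.univ.filter (fun j => j ≠ i), T i j)
          + ∑ i : Fin N, ∑ j ∈ Finset.univ.filter (fun j => j ≠ i), T j i := by
      rw [← Finset.sum_add_distrib]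
      exact Finset.sum_congr rfl fun i _ => Finset.sum_add_distrib
    rw [h3, hswap] at h2
    linarith
  -- conclude
  have hexp : ∑ i : Fin N,
      ⟪∑ j ∈ Finset.univ.filter (fun j => j ≠ i), (‖x i - x j‖ ^ q)⁻¹ • (x i - x j), v i⟫_ℝ
      - ∑ i : Fin N, ∑ j ∈ Finset.univ.filter (fun j => j ≠ i), ‖x i - x j‖ ^ (1 - q)
      = ∑ i : Fin N, ∑ j ∈ Finset.univ.filter (fun j => j ≠ i), T i j := by
    rw [← Finset.sum_sub_distrib]
    refine Finset.sum_congr rfl fun i _ => ?_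
    rw [hrw i, ← Finset.sum_sub_distrib]
  linarith [hexp ▸ goal2]
end
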